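/- arXiv:2103.01508 — 10 statements merged into one kernel-verified Lean document; each statement's English description precedes it below -/
import Mathlib

section
/- In any Gallai coloring (edge-coloring of a complete graph with no rainbow triangle) of a complete graph on at least 2 vertices, if (V_1,...,V_q) is a Gallai partition with the smallest number of parts and q > 2, then for each part V_i there are exactly two colors appearing on edges between V_i and the rest of the graph; consequently q ≠ 3. -/
def RainbowTri {V : Type} {k : ℕ} (Adj : V → V → Prop) (c : V → V → Fin k) : Prop :=
  ∃ a b d : V, Adj a b ∧ Adj a d ∧ Adj b d ∧
    c a b ≠ c a d ∧ c a b ≠ c b d ∧ c a d ≠ c b d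

def MonoTri {V : Type} {k : ℕ} (Adj : V → V → Prop) (c : V → V → Fin k) : Prop :=
  ∃ a b d : V, a ≠ b ∧ a ≠ d ∧ b ≠ d ∧ Adj a b ∧ Adj a d ∧ Adj b d ∧
    c a b = c a d ∧ c a d = c b d

def MonoP4 {V : Type} {k : ℕ} (Adj : V → V → Prop) (c : V → V → Fin k) : Prop :=
  ∃ a b d e : V, a ≠ b ∧ a ≠ d ∧ a ≠ e ∧ b ≠ d ∧ b ≠ e ∧ d ≠ e ∧
    Adj a b ∧ Adj b d ∧ Adj d e ∧ c a b = c b d ∧ c b d = c d e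

def MonoC4 {V : Type} {k : ℕ} (Adj : V → V → Prop) (c : V → V → Fin k) : Prop :=
  ∃ a b d e : V, a ≠ b ∧ a ≠ d ∧ a ≠ e ∧ b ≠ d ∧ b ≠ e ∧ d ≠ e ∧
    Adj a b ∧ Adj b d ∧ Adj d e ∧ Adj e a ∧
    c a b = c b d ∧ c b d = c d e ∧ c d e = c e a

def MonoClique {V : Type} {k : ℕ} [DecidableEq V] (Adj : V → V → Prop)
    (c : V → V → Fin k) (p : ℕ) (i : Fin k) : Prop :=
  ∃ S : Finset V, S.card = p ∧ ∀ a ∈ S, ∀ b ∈ S, a ≠ b → Adj a b ∧ c a b = i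

def MonoStar {V : Type} {k : ℕ} [DecidableEq V] (Adj : V → V → Prop)
    (c : V → V → Fin k) (m : ℕ) (i : Fin k) : Prop :=
  ∃ v : V, ∃ S : Finset V, S.card = m ∧ v ∉ S ∧ ∀ u ∈ S, Adj v u ∧ c v u = i

def Full {V : Type} : V → V → Prop := fun a b => a ≠ b

def OAdj {m : ℕ} (A : Finset (Fin m)) : Option (Fin m) → Option (Fin m) → Prop
  | some i, some j => i ≠ j
  | some i, none   => i ∈ A
  | none,   some j => j ∈ A
  | none,   none   => False

def IsGallaiPartition {n k q : ℕ} (c : Fin n → Fin n → Fin k)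
    (P : Fin q → Finset (Fin n)) : Prop :=
  2 ≤ q ∧ (∀ i, (P i).Nonempty) ∧ (∀ i j, i ≠ j → Disjoint (P i) (P j)) ∧
  (∀ x : Fin n, ∃ i, x ∈ P i) ∧
  (∀ i j, i ≠ j → ∃ col : Fin k, ∀ a ∈ P i, ∀ b ∈ P j, c a b = col) ∧
  (∃ c1 c2 : Fin k, ∀ i j, i ≠ j → ∀ a ∈ P i, ∀ b ∈ P j, c a b = c1 ∨ c a b = c2)

def MonoCopy {W V : Type} {k : ℕ} (H : SimpleGraph W) (Adj : V → V → Prop)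
    (c : V → V → Fin k) (i : Fin k) : Prop :=
  ∃ φ : W → V, Function.Injective φ ∧
    ∀ a b, H.Adj a b → Adj (φ a) (φ b) ∧ c (φ a) (φ b) = i

def MonoMergeCopy {W V : Type} {k : ℕ} (H : SimpleGraph W)
    (c : V → V → Fin k) (i : Fin k) : Prop :=
  ∃ φ : W → V, ∀ a b, H.Adj a b → φ a ≠ φ b ∧ c (φ a) (φ b) = i

lemma two_part_gallai {n k : ℕ} (c : Fin n → Fin n → Fin k)
    (hsym : ∀ a b, c a b = c b a)
    (S : Finset (Fin n)) (hS : S.Nonempty) (hSc : (Finset.univ \ S).Nonempty)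
    (d : Fin k) (hd : ∀ a ∈ S, ∀ b ∉ S, c a b = d) :
    IsGallaiPartition c (fun t : Fin 2 => if t = 0 then S else Finset.univ \ S) := by
  have hcol : ∀ i j : Fin 2, i ≠ j → ∀ a ∈ (if i = 0 then S else Finset.univ \ S),
      ∀ b ∈ (if j = 0 then S else Finset.univ \ S), c a b = d := by
    have h01 : ∀ a ∈ S, ∀ b ∈ Finset.univ \ S, c a b = d := fun a ha b hb =>
      hd a ha b (Finset.mem_sdiff.mp hb).2
    intro i j hij a ha b hb
    fin_cases i <;> fin_cases j
    · exact absurd rfl hij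
    · exact h01 a (by simpa using ha) b (by simpa using hb)
    · rw [hsym]; exact h01 b (by simpa using hb) a (by simpa using ha)
    · exact absurd rfl hij
  refine ⟨le_refl 2, ?_, ?_, ?_, fun i j hij => ⟨d, hcol i j hij⟩,
    ⟨d, d, fun i j hij a ha b hb => Or.inl (hcol i j hij a ha b hb)⟩⟩
  · intro i; fin_cases i <;> simpa
  · intro i j hij
    fin_cases i <;> fin_cases j <;> simp_all
    · exact Finset.disjoint_sdiff
    · exact Finset.sdiff_disjoint
  · intro x
    by_cases hx : x ∈ S
    · exact ⟨0, by simpa⟩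
    · exact ⟨1, by simp [hx]⟩

theorem stmt0 {n k q : ℕ} (hn : 2 ≤ n) (c : Fin n → Fin n → Fin k)
    (hsym : ∀ a b, c a b = c b a)
    (hnr : ¬ RainbowTri Full c)
    (P : Fin q → Finset (Fin n)) (hP : IsGallaiPartition c P)
    (hmin : ∀ (q' : ℕ) (P' : Fin q' → Finset (Fin n)),
      IsGallaiPartition c P' → q ≤ q')
    (hq : 2 < q) :
    (∀ i : Fin q, ∃ c1 c2 : Fin k, c1 ≠ c2 ∧
      (∀ a ∈ P i, ∀ b : Fin n, b ∉ P i → c a b = c1 ∨ c a b = c2) ∧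
      (∃ a ∈ P i, ∃ b : Fin n, b ∉ P i ∧ c a b = c1) ∧
      (∃ a ∈ P i, ∃ b : Fin n, b ∉ P i ∧ c a b = c2)) ∧ q ≠ 3 := by
  obtain ⟨hq2, hne, hdisj, hcov, hpair, c1, c2, hcols⟩ := hP
  -- every edge leaving a part is colored c1 or c2
  have hmemout : ∀ (i : Fin q) (b : Fin n), b ∉ P i → ∃ j, j ≠ i ∧ b ∈ P j := by
    intro i b hb
    obtain ⟨j, hj⟩ := hcov b
    exact ⟨j, fun h => hb (h ▸ hj), hj⟩
  have hout : ∀ (i : Fin q), ∀ a ∈ P i, ∀ b ∉ P i, c a b = c1 ∨ c a b = c2 := by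
    intro i a ha b hb
    obtain ⟨j, hji, hbj⟩ := hmemout i b hb
    exact hcols i j (Ne.symm hji) a ha b hbj
  have main : ∀ i : Fin q, ∃ d1 d2 : Fin k, d1 ≠ d2 ∧
      (∀ a ∈ P i, ∀ b : Fin n, b ∉ P i → c a b = d1 ∨ c a b = d2) ∧
      (∃ a ∈ P i, ∃ b : Fin n, b ∉ P i ∧ c a b = d1) ∧
      (∃ a ∈ P i, ∃ b : Fin n, b ∉ P i ∧ c a b = d2) := by
    intro i
    obtain ⟨a0, ha0⟩ := hne i
    obtain ⟨j, hji⟩ := Fintype.exists_ne_of_one_lt_card (by simp; omega) i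
    obtain ⟨b0, hb0⟩ := hne j
    have hb0i : b0 ∉ P i := fun h => Finset.disjoint_left.mp (hdisj j i hji) hb0 h
    by_cases hone : ∀ a ∈ P i, ∀ b ∉ P i, c a b = c a0 b0
    · -- all outgoing edges one color : contradiction with minimality
      have hgp := two_part_gallai c hsym (P i) ⟨a0, ha0⟩
        ⟨b0, Finset.mem_sdiff.mpr ⟨Finset.mem_univ _, hb0i⟩⟩ (c a0 b0) hone
      have := hmin 2 _ hgp
      omega
    · push_neg at hone
      obtain ⟨a1, ha1, b1, hb1, hcb⟩ := hone
      refine ⟨c a0 b0, c a1 b1, Ne.symm hcb, ?_, ⟨a0, ha0, b0, hb0i, rfl⟩,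
        ⟨a1, ha1, b1, hb1, rfl⟩⟩
      intro a ha b hb
      have h0 := hout i a0 ha0 b0 hb0i
      have h1 := hout i a1 ha1 b1 hb1
      have h := hout i a ha b hb
      rcases h0 with h0 | h0 <;> rcases h1 with h1 | h1 <;> rcases h with h | h
      · exact absurd (h1.trans h0.symm) hcb
      · exact absurd (h1.trans h0.symm) hcb
      · exact Or.inl (h.trans h0.symm)
      · exact Or.inr (h.trans h1.symm)
      · exact Or.inr (h.trans h1.symm)
      · exact Or.inl (h.trans h0.symm)
      · exact absurd (h1.trans h0.symm) hcb
      · exact absurd (h1.trans h0.symm) hcb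
  refine ⟨main, ?_⟩
  intro h3
  subst h3
  obtain ⟨col01, h01⟩ := hpair 0 1 (by decide)
  obtain ⟨col02, h02⟩ := hpair 0 2 (by decide)
  obtain ⟨col12, h12⟩ := hpair 1 2 (by decide)
  -- any edge leaving part i has color one of the two pair-colors
  have key : ∀ (i j1 j2 : Fin 3), i ≠ j1 → i ≠ j2 → j1 ≠ j2 →
      ∀ colA colB, (∀ a ∈ P i, ∀ b ∈ P j1, c a b = colA) →
      (∀ a ∈ P i, ∀ b ∈ P j2, c a b = colB) → colA ≠ colB := by
    intro i j1 j2 hij1 hij2 hj12 colA colB hA hB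
    obtain ⟨d1, d2, hd12, _, ⟨x1, hx1, y1, hy1, he1⟩, ⟨x2, hx2, y2, hy2, he2⟩⟩ := main i
    have hval : ∀ x ∈ P i, ∀ y : Fin n, y ∉ P i → c x y = colA ∨ c x y = colB := by
      intro x hx y hy
      obtain ⟨j, hji, hyj⟩ := hmemout i y hy
      have hv : j.val = j1.val ∨ j.val = j2.val := by
        have := i.isLt; have := j.isLt; have := j1.isLt; have := j2.isLt
        have e1 : i.val ≠ j1.val := fun h => hij1 (Fin.ext h)
        have e2 : i.val ≠ j2.val := fun h => hij2 (Fin.ext h)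
        have e3 : j1.val ≠ j2.val := fun h => hj12 (Fin.ext h)
        have e4 : j.val ≠ i.val := fun h => hji (Fin.ext h)
        omega
      have : j = j1 ∨ j = j2 := by
        rcases hv with h | h
        · exact Or.inl (Fin.ext h)
        · exact Or.inr (Fin.ext h)
      rcases this with rfl | rfl
      · exact Or.inl (hA x hx y hyj)
      · exact Or.inr (hB x hx y hyj)
    have e1 := hval x1 hx1 y1 hy1
    have e2 := hval x2 hx2 y2 hy2
    intro hAB
    apply hd12
    have k1 : d1 = colA := by
      rcases e1 with h | h
      · rw [← he1]; exact h
      · rw [← he1, h]; exact hAB.symm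
    have k2 : d2 = colA := by
      rcases e2 with h | h
      · rw [← he2]; exact h
      · rw [← he2, h]; exact hAB.symm
    rw [k1, k2]
  have h10 : ∀ a ∈ P 1, ∀ b ∈ P 0, c a b = col01 := fun a ha b hb =>
    (hsym a b).trans (h01 b hb a ha)
  have h20 : ∀ a ∈ P 2, ∀ b ∈ P 0, c a b = col02 := fun a ha b hb =>
    (hsym a b).trans (h02 b hb a ha)
  have h21 : ∀ a ∈ P 2, ∀ b ∈ P 1, c a b = col12 := fun a ha b hb =>
    (hsym a b).trans (h12 b hb a ha)
  have n01 : col01 ≠ col02 := key 0 1 2 (by decide) (by decide) (by decide) _ _ h01 h02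
  have n02 : col01 ≠ col12 := key 1 0 2 (by decide) (by decide) (by decide) _ _ h10 h12
  have n12 : col02 ≠ col12 := key 2 0 1 (by decide) (by decide) (by decide) _ _ h20 h21
  -- but each pair-color is c1 or c2 : pigeonhole contradiction
  obtain ⟨a0, ha0⟩ := hne 0
  obtain ⟨a1, ha1⟩ := hne 1
  obtain ⟨a2, ha2⟩ := hne 2
  have m01 : col01 = c1 ∨ col01 = c2 := by
    rw [← h01 a0 ha0 a1 ha1]; exact hcols 0 1 (by decide) a0 ha0 a1 ha1
  have m02 : col02 = c1 ∨ col02 = c2 := by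
    rw [← h02 a0 ha0 a2 ha2]; exact hcols 0 2 (by decide) a0 ha0 a2 ha2
  have m12 : col12 = c1 ∨ col12 = c2 := by
    rw [← h12 a1 ha1 a2 ha2]; exact hcols 1 2 (by decide) a1 ha1 a2 ha2
  rcases m01 with h | h <;> rcases m02 with h' | h' <;> rcases m12 with h'' | h''
  · exact n01 (h.trans h'.symm)
  · exact n01 (h.trans h'.symm)
  · exact n02 (h.trans h''.symm)
  · exact n12 (h'.trans h''.symm)
  · exact n12 (h'.trans h''.symm)
  · exact n02 (h.trans h''.symm)
  · exact n01 (h.trans h'.symm)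
  · exact n01 (h.trans h'.symm)
end

section
/- The 2-color Ramsey number of the 4-cycle C_4 equals 6: every 2-edge-coloring of K_6 contains a monochromatic C_4, and there exists a 2-edge-coloring of K_5 with no monochromatic C_4. -/
set_option maxHeartbeats 2000000000
set_option maxRecDepth 8000


def eA : Fin 15 → Fin 6 := ![0,0,0,0,0,1,1,1,1,2,2,2,3,3,4]
def eB : Fin 15 → Fin 6 := ![1,2,3,4,5,2,3,4,5,3,4,5,4,5,5]
def pw : Fin 15 → ℕ := ![1,2,4,8,16,32,64,128,256,512,1024,2048,4096,8192,16384]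

def eidx (a b : Fin 6) : Fin 15 :=
  ⟨(min a.1 b.1 * (11 - min a.1 b.1) / 2 + max a.1 b.1 - min a.1 b.1 - 1) % 15,
    Nat.mod_lt _ (by norm_num)⟩

theorem eAB : ∀ x y : Fin 6, x ≠ y →
    (eA (eidx x y) = x ∧ eB (eidx x y) = y) ∨
    (eA (eidx x y) = y ∧ eB (eidx x y) = x) := by decide

theorem pigeon : ∀ g : Fin 5 → Fin 2, ∃ j k l : Fin 5,
    j < k ∧ k < l ∧ g j = g k ∧ g k = g l := by decide

def mk6 (a0 a1 a2 a3 a4 a5 : Fin 6) : Fin 6 → Fin 6 := fun w =>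
  if w = 0 then a0 else if w = 1 then a1 else if w = 2 then a2
  else if w = 3 then a3 else if w = 4 then a4 else a5

theorem perm_exists : ∀ x y z : Fin 5, x < y → y < z →
    ∃ u v : Fin 6, Function.Injective (mk6 0 x.succ y.succ z.succ u v) := by decide

theorem swap_inj : ∀ i : Fin 2,
    Function.Injective (fun t : Fin 2 => if t = i then (0 : Fin 2) else 1) := by decide

def cyc6 : List (Fin 6 × Fin 6 × Fin 6 × Fin 6 × ℕ × ℕ × ℕ × ℕ) :=
  [(0,1,2,3,1,32,512,4),
   (0,1,3,2,1,64,512,2),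
   (0,2,1,3,2,32,64,4),
   (0,1,2,4,1,32,1024,8),
   (0,1,4,2,1,128,1024,2),
   (0,2,1,4,2,32,128,8),
   (0,1,2,5,1,32,2048,16),
   (0,1,5,2,1,256,2048,2),
   (0,2,1,5,2,32,256,16),
   (0,1,3,4,1,64,4096,8),
   (0,1,4,3,1,128,4096,4),
   (0,3,1,4,4,64,128,8),
   (0,1,3,5,1,64,8192,16),
   (0,1,5,3,1,256,8192,4),
   (0,3,1,5,4,64,256,16),
   (0,1,4,5,1,128,16384,16),
   (0,1,5,4,1,256,16384,8),
   (0,4,1,5,8,128,256,16),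
   (0,2,3,4,2,512,4096,8),
   (0,2,4,3,2,1024,4096,4),
   (0,3,2,4,4,512,1024,8),
   (0,2,3,5,2,512,8192,16),
   (0,2,5,3,2,2048,8192,4),
   (0,3,2,5,4,512,2048,16),
   (0,2,4,5,2,1024,16384,16),
   (0,2,5,4,2,2048,16384,8),
   (0,4,2,5,8,1024,2048,16),
   (0,3,4,5,4,4096,16384,16),
   (0,3,5,4,4,8192,16384,8),
   (0,4,3,5,8,4096,8192,16),
   (1,2,3,4,32,512,4096,128),
   (1,2,4,3,32,1024,4096,64),
   (1,3,2,4,64,512,1024,128),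
   (1,2,3,5,32,512,8192,256),
   (1,2,5,3,32,2048,8192,64),
   (1,3,2,5,64,512,2048,256),
   (1,2,4,5,32,1024,16384,256),
   (1,2,5,4,32,2048,16384,128),
   (1,4,2,5,128,1024,2048,256),
   (1,3,4,5,64,4096,16384,256),
   (1,3,5,4,64,8192,16384,128),
   (1,4,3,5,128,4096,8192,256),
   (2,3,4,5,512,4096,16384,2048),
   (2,3,5,4,512,8192,16384,1024),
   (2,4,3,5,1024,4096,8192,2048)]


def good (m : ℕ) (t : Fin 6 × Fin 6 × Fin 6 × Fin 6 × ℕ × ℕ × ℕ × ℕ) : Bool :=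
  match t with
  | (_,_,_,_,p1,p2,p3,p4) =>
    (m / p1 % 2 == m / p2 % 2) && (m / p2 % 2 == m / p3 % 2) && (m / p3 % 2 == m / p4 % 2)

set_option maxRecDepth 4000 in
theorem cyc6_ok : ∀ t ∈ cyc6, match t with
  | (a,b,d,e,p1,p2,p3,p4) =>
    a ≠ b ∧ a ≠ d ∧ a ≠ e ∧ b ≠ d ∧ b ≠ e ∧ d ≠ e ∧
    p1 = pw (eidx a b) ∧ p2 = pw (eidx b d) ∧ p3 = pw (eidx d e) ∧
    p4 = pw (eidx e a) := by decide

set_option maxRecDepth 4000 in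
theorem key : ∀ a < 4, ∀ b < 1024, cyc6.any (good (8*(a*1024+b))) = true := by decide

theorem maskFacts (n04 n05 n12 n13 n14 n15 n23 n24 n25 n34 n35 n45 : ℕ)
    (h04 : n04 < 2) (h05 : n05 < 2) (h12 : n12 < 2) (h13 : n13 < 2)
    (h14 : n14 < 2) (h15 : n15 < 2) (h23 : n23 < 2) (h24 : n24 < 2)
    (h25 : n25 < 2) (h34 : n34 < 2) (h35 : n35 < 2) (h45 : n45 < 2)
    (b m : ℕ)
    (hb : b = n04 + 2*n05 + 4*n12 + 8*n13 + 16*n14 + 32*n15 + 64*n23 + 128*n24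
      + 256*n25 + 512*n34 + 1024*n35 + 2048*n45)
    (hm : m = 8 * b) :
    b / 1024 < 4 ∧ b % 1024 < 1024 ∧ 8 * (b / 1024 * 1024 + b % 1024) = m ∧
    m / 1 % 2 = 0 ∧ m / 2 % 2 = 0 ∧ m / 4 % 2 = 0 ∧
    m / 8 % 2 = n04 ∧ m / 16 % 2 = n05 ∧ m / 32 % 2 = n12 ∧ m / 64 % 2 = n13 ∧
    m / 128 % 2 = n14 ∧ m / 256 % 2 = n15 ∧ m / 512 % 2 = n23 ∧ m / 1024 % 2 = n24 ∧
    m / 2048 % 2 = n25 ∧ m / 4096 % 2 = n34 ∧ m / 8192 % 2 = n35 ∧ m / 16384 % 2 = n45 := by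
  omega

theorem main6 : ∀ c : Fin 6 → Fin 6 → Fin 2, (∀ a b, c a b = c b a) → MonoC4 Full c := by
  intro c hsym
  obtain ⟨j, k, l, hjk, hkl, hg1, hg2⟩ := pigeon (fun t : Fin 5 => c 0 t.succ)
  set i := c 0 j.succ with hi
  set s : Fin 2 → Fin 2 := fun t => if t = i then 0 else 1 with hs
  set c1 : Fin 6 → Fin 6 → Fin 2 := fun a b => s (c a b) with hc1
  obtain ⟨u, v, hιinj⟩ := perm_exists j k l hjk hkl
  set ι := mk6 0 j.succ k.succ l.succ u v with hι
  set c2 : Fin 6 → Fin 6 → Fin 2 := fun a b => c1 (ι a) (ι b) with hc2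
  have hsym2 : ∀ a b, c2 a b = c2 b a := fun a b => congrArg s (hsym _ _)
  have h01 : c2 0 1 = 0 := by
    show (if c (ι 0) (ι 1) = i then (0:Fin 2) else 1) = 0
    rw [show ι 0 = 0 from rfl, show ι 1 = j.succ from rfl, ← hi, if_pos rfl]
  have h02 : c2 0 2 = 0 := by
    show (if c (ι 0) (ι 2) = i then (0:Fin 2) else 1) = 0
    rw [show ι 0 = 0 from rfl, show ι 2 = k.succ from rfl, if_pos (by rw [hi]; exact hg1.symm)]
  have h03 : c2 0 3 = 0 := by
    show (if c (ι 0) (ι 3) = i then (0:Fin 2) else 1) = 0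
    rw [show ι 0 = 0 from rfl, show ι 3 = l.succ from rfl,
      if_pos (by rw [hi]; exact (hg1.trans hg2).symm)]
  -- mask
  obtain ⟨bsum, hbsum⟩ : ∃ x : ℕ, x = (c2 0 4).val + 2*(c2 0 5).val + 4*(c2 1 2).val
      + 8*(c2 1 3).val + 16*(c2 1 4).val + 32*(c2 1 5).val + 64*(c2 2 3).val
      + 128*(c2 2 4).val + 256*(c2 2 5).val + 512*(c2 3 4).val + 1024*(c2 3 5).val
      + 2048*(c2 4 5).val := ⟨_, rfl⟩
  obtain ⟨m, hm⟩ : ∃ x : ℕ, x = 8 * bsum := ⟨_, rfl⟩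
  have z01 : (c2 0 1).val = 0 := by rw [h01]; rfl
  have z02 : (c2 0 2).val = 0 := by rw [h02]; rfl
  have z03 : (c2 0 3).val = 0 := by rw [h03]; rfl
  obtain ⟨hd4, hd5, hdm, e01, e02, e03, hb04, hb05, hb12, hb13, hb14, hb15, hb23,
      hb24, hb25, hb34, hb35, hb45⟩ :=
    maskFacts _ _ _ _ _ _ _ _ _ _ _ _
      (c2 0 4).isLt (c2 0 5).isLt (c2 1 2).isLt (c2 1 3).isLt (c2 1 4).isLt (c2 1 5).isLt
      (c2 2 3).isLt (c2 2 4).isLt (c2 2 5).isLt (c2 3 4).isLt (c2 3 5).isLt (c2 4 5).isLt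
      bsum m hbsum hm
  have hb01 : m / 1 % 2 = (c2 0 1).val := e01.trans z01.symm
  have hb02 : m / 2 % 2 = (c2 0 2).val := e02.trans z02.symm
  have hb03 : m / 4 % 2 = (c2 0 3).val := e03.trans z03.symm
  have hb : ∀ w : Fin 15, m / pw w % 2 = (c2 (eA w) (eB w)).val := by
    intro w; fin_cases w
    · exact hb01
    · exact hb02
    · exact hb03
    · exact hb04
    · exact hb05
    · exact hb12
    · exact hb13
    · exact hb14
    · exact hb15
    · exact hb23
    · exact hb24
    · exact hb25
    · exact hb34
    · exact hb35
    · exact hb45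
  have hbit : ∀ x y : Fin 6, x ≠ y → m / pw (eidx x y) % 2 = (c2 x y).val := by
    intro x y hxy
    rcases eAB x y hxy with ⟨hA, hB⟩ | ⟨hA, hB⟩
    · have h := hb (eidx x y); rwa [hA, hB] at h
    · have h := hb (eidx x y); rw [hA, hB] at h; rw [hsym2 x y]; exact h
  -- apply key
  have h1 := key (bsum / 1024) hd4 (bsum % 1024) hd5
  rw [hdm] at h1
  rw [List.any_eq_true] at h1
  obtain ⟨t, htmem, hgood⟩ := h1
  obtain ⟨a, b', d, e, p1, p2, p3, p4⟩ := t
  obtain ⟨hab, had, hae, hbd, hbe, hde, hp1, hp2, hp3, hp4⟩ := cyc6_ok _ htmem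
  simp only [good, Bool.and_eq_true, beq_iff_eq] at hgood
  obtain ⟨⟨h12, h23⟩, h34⟩ := hgood
  rw [hp1, hp2, hbit a b' hab, hbit b' d hbd] at h12
  rw [hp2, hp3, hbit b' d hbd, hbit d e hde] at h23
  rw [hp3, hp4, hbit d e hde, hbit e a (Ne.symm hae)] at h34
  -- mono C4 in c2, transfer to c
  refine ⟨ι a, ι b', ι d, ι e, ?_, ?_, ?_, ?_, ?_, ?_, ?_, ?_, ?_, ?_, ?_, ?_, ?_⟩
  · exact fun h => hab (hιinj h)
  · exact fun h => had (hιinj h)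
  · exact fun h => hae (hιinj h)
  · exact fun h => hbd (hιinj h)
  · exact fun h => hbe (hιinj h)
  · exact fun h => hde (hιinj h)
  · exact fun h => hab (hιinj h)
  · exact fun h => hbd (hιinj h)
  · exact fun h => hde (hιinj h)
  · exact fun h => hae (hιinj h.symm)
  · exact swap_inj i (show s (c (ι a) (ι b')) = s (c (ι b') (ι d)) from Fin.val_injective h12)
  · exact swap_inj i (show s (c (ι b') (ι d)) = s (c (ι d) (ι e)) from Fin.val_injective h23)
  · exact swap_inj i (show s (c (ι d) (ι e)) = s (c (ι e) (ι a)) from Fin.val_injective h34)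

theorem stmt1 :
    (∀ c : Fin 6 → Fin 6 → Fin 2, (∀ a b, c a b = c b a) → MonoC4 Full c) ∧
    (∃ c : Fin 5 → Fin 5 → Fin 2, (∀ a b, c a b = c b a) ∧ ¬ MonoC4 Full c) := by
  constructor
  · exact main6
  · refine ⟨fun a b => if (a.1+1)%5 = b.1 ∨ (b.1+1)%5 = a.1 then 0 else 1, by decide, ?_⟩
    unfold MonoC4 Full
    decide
end

section
/- For all positive integers p_1,...,p_k, the star-critical Gallai-Ramsey number satisfies gr_k^*(K_3 : K_{p_1},...,K_{p_k}) = gr_k(K_3 : K_{p_1},...,K_{p_k}) - 1. Equivalently, if n = gr_k(K_3 : K_{p_1},...,K_{p_k}), then there exists a k-edge-coloring of K_n minus one edge containing no rainbow triangle and no monochromatic K_{p_i} in color i for any i. -/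
/-!
When `A` is everything, `K_{n-1} ⊔ K_{1,n-1}` is `K_n`. When `|A| < n - 1`, make the extra vertex a
clone of a vertex `w ∉ A` in an extremal coloring of `K_{n-1}`: the clone is not adjacent to `w`, so
the projection identifying them is injective on edges and carries every rainbow triangle or
monochromatic clique back into `K_{n-1}`.
-/

section Comap

variable {V W : Type} {k : ℕ} {AdjV : V → V → Prop} {AdjW : W → W → Prop}

theorem RainbowTri.of_comap {f : V → W} (hf : ∀ x y, AdjV x y → AdjW (f x) (f y))
    {c : W → W → Fin k} : RainbowTri AdjV (fun x y => c (f x) (f y)) → RainbowTri AdjW c := by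
  rintro ⟨a, b, d, hab, had, hbd, hne⟩
  exact ⟨f a, f b, f d, hf _ _ hab, hf _ _ had, hf _ _ hbd, hne⟩

theorem MonoClique.of_comap [DecidableEq V] [DecidableEq W] {f : V → W}
    (hf : ∀ x y, AdjV x y → AdjW (f x) (f y) ∧ f x ≠ f y) {c : W → W → Fin k} {p : ℕ}
    {i : Fin k} : MonoClique AdjV (fun x y => c (f x) (f y)) p i → MonoClique AdjW c p i := by
  rintro ⟨S, hcard, hS⟩
  have hinj : Set.InjOn f S := fun x hx y hy hxy =>
    by_contra fun hne => (hf x y (hS x hx y hy hne).1).2 hxy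
  refine ⟨S.image f, by rw [Finset.card_image_of_injOn hinj, hcard], ?_⟩
  simp only [Finset.mem_image]
  rintro _ ⟨a, ha, rfl⟩ _ ⟨b, hb, rfl⟩ hne
  have hab := hS a ha b hb (ne_of_apply_ne f hne)
  exact ⟨(hf a b hab.1).1, hab.2⟩

theorem rainbowTri_or_monoClique_of_comap [DecidableEq V] [DecidableEq W] {f : V → W}
    (hf : ∀ x y, AdjV x y → AdjW (f x) (f y) ∧ f x ≠ f y) {c : W → W → Fin k} {p : Fin k → ℕ}
    (h : RainbowTri AdjV (fun x y => c (f x) (f y)) ∨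
      ∃ i, MonoClique AdjV (fun x y => c (f x) (f y)) (p i) i) :
    RainbowTri AdjW c ∨ ∃ i, MonoClique AdjW c (p i) i :=
  h.imp (RainbowTri.of_comap fun x y hxy => (hf x y hxy).1)
    fun ⟨i, hi⟩ => ⟨i, MonoClique.of_comap hf hi⟩

end Comap

theorem oAdj_univ_iff {m : ℕ} {x y : Option (Fin m)} : OAdj Finset.univ x y ↔ x ≠ y := by
  cases x <;> cases y <;> simp [OAdj]

theorem OAdj.getD_ne {m : ℕ} {A : Finset (Fin m)} {w : Fin m} (hw : w ∉ A)
    {x y : Option (Fin m)} (h : OAdj A x y) : x.getD w ≠ y.getD w := by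
  cases x <;> cases y <;> simp only [OAdj, Option.getD_some, Option.getD_none] at h ⊢
  · exact fun hwy => hw (hwy ▸ h)
  · exact fun hxw => hw (hxw ▸ h)
  · exact h

theorem stmt4_general (k : ℕ) (p : Fin k → ℕ) (n : ℕ)
    (hn : IsLeast {n' | ∀ c : Fin n' → Fin n' → Fin k, (∀ a b, c a b = c b a) →
        RainbowTri Full c ∨ ∃ i, MonoClique Full c (p i) i} n) :
    IsLeast {s | ∀ A : Finset (Fin (n - 1)), A.card = s →
      ∀ c : Option (Fin (n - 1)) → Option (Fin (n - 1)) → Fin k,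
        (∀ a b, c a b = c b a) →
        RainbowTri (OAdj A) c ∨ ∃ i, MonoClique (OAdj A) c (p i) i} (n - 1) := by
  constructor
  · intro A hA c hc
    obtain rfl : A = Finset.univ := Finset.eq_univ_of_card A (by simpa using hA)
    obtain ⟨g⟩ : Nonempty (Fin n ↪ Option (Fin (n - 1))) :=
      Function.Embedding.nonempty_of_card_le (by simp; omega)
    have hg : ∀ x y, Full x y → OAdj Finset.univ (g x) (g y) ∧ g x ≠ g y := fun x y hxy =>
      ⟨oAdj_univ_iff.2 (g.injective.ne hxy), g.injective.ne hxy⟩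
    exact rainbowTri_or_monoClique_of_comap hg (hn.1 _ fun a b => hc _ _)
  · intro s hs
    by_contra! hlt
    have hbad : ¬ ∀ c : Fin (n - 1) → Fin (n - 1) → Fin k, (∀ a b, c a b = c b a) →
        RainbowTri Full c ∨ ∃ i, MonoClique Full c (p i) i :=
      fun h => absurd (hn.2 h) (by omega)
    simp only [not_forall, not_or, not_exists] at hbad
    obtain ⟨c₀, hc₀, hnoRainbow, hnoMono⟩ := hbad
    obtain ⟨A, -, hA⟩ :=
      Finset.exists_subset_card_eq (s := (Finset.univ : Finset (Fin (n - 1)))) (n := s)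
        (by simp; omega)
    obtain ⟨w, -, hw⟩ := Finset.exists_mem_notMem_of_card_lt_card
      (s := A) (t := Finset.univ) (by simp; omega)
    have hproj : ∀ x y, OAdj A x y → Full (x.getD w) (y.getD w) ∧ x.getD w ≠ y.getD w :=
      fun x y hxy => ⟨OAdj.getD_ne hw hxy, OAdj.getD_ne hw hxy⟩
    rcases rainbowTri_or_monoClique_of_comap hproj (hs A hA _ fun a b => hc₀ _ _) with h | ⟨i, h⟩
    exacts [hnoRainbow h, hnoMono i h]

theorem stmt4 (k : ℕ) (hk : 1 ≤ k) (p : Fin k → ℕ) (hp : ∀ i, 0 < p i) (n : ℕ)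
    (hn : IsLeast {n' | ∀ c : Fin n' → Fin n' → Fin k, (∀ a b, c a b = c b a) →
        RainbowTri Full c ∨ ∃ i, MonoClique Full c (p i) i} n) :
    IsLeast {s | ∀ A : Finset (Fin (n - 1)), A.card = s →
      ∀ c : Option (Fin (n - 1)) → Option (Fin (n - 1)) → Fin k,
        (∀ a b, c a b = c b a) →
        RainbowTri (OAdj A) c ∨ ∃ i, MonoClique (OAdj A) c (p i) i} (n - 1) :=
  stmt4_general k p n hn
end

section
/- If there exists a k-edge-coloring of K_{n-1} with no rainbow triangle and no monochromatic K_{p_i} in color i for any i ∈ [k], then there exists a k-edge-coloring of K_{n-1} ⊔ K_{1,n-2} (the graph obtained by adding a new vertex joined to n-2 of the n-1 vertices) with no rainbow triangle and no monochromatic K_{p_i} in color i for any i: extend the coloring by giving each new edge vw the color of uw, where u is the unique non-neighbor of v. -/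
theorem stmt5 (m k : ℕ) (hm : 1 ≤ m) (p : Fin k → ℕ)
    (f : Fin m → Fin m → Fin k) (hsym : ∀ a b, f a b = f b a)
    (hnr : ¬ RainbowTri Full f) (hnm : ∀ i, ¬ MonoClique Full f (p i) i) :
    ∃ u : Fin m, ∃ g : Option (Fin m) → Option (Fin m) → Fin k,
      (∀ a b, g a b = g b a) ∧
      (∀ a b : Fin m, g (some a) (some b) = f a b) ∧
      (∀ w : Fin m, w ≠ u → g none (some w) = f u w) ∧
      ¬ RainbowTri (OAdj (Finset.univ.erase u)) g ∧
      ∀ i, ¬ MonoClique (OAdj (Finset.univ.erase u)) g (p i) i := by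
  set u : Fin m := ⟨0, hm⟩ with hu
  refine ⟨u, fun x y => match x, y with
    | some a, some b => f a b
    | some a, none => f u a
    | none, some b => f u b
    | none, none => f u u, ?_, ?_, ?_, ?_, ?_⟩
  · rintro (_|a) (_|b) <;> simp [hsym]
  · intro a b; rfl
  · intro w _; rfl
  · rintro ⟨(_|a), (_|b), (_|d), hab, had, hbd, h1, h2, h3⟩
    · exact hab
    · exact hab
    · exact had
    · simp only [OAdj, Finset.mem_erase] at hab had hbd
      exact hnr ⟨u, b, d, Ne.symm hab.1, Ne.symm had.1, hbd, h1, h2, h3⟩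
    · exact hbd
    · simp only [OAdj, Finset.mem_erase] at hab had hbd
      exact hnr ⟨u, a, d, Ne.symm hab.1, Ne.symm hbd.1, had, h2, h1, Ne.symm h3⟩
    · simp only [OAdj, Finset.mem_erase] at hab had hbd
      exact hnr ⟨u, a, b, Ne.symm had.1, Ne.symm hbd.1, hab, h3, Ne.symm h1, Ne.symm h2⟩
    · exact hnr ⟨a, b, d, hab, had, hbd, h1, h2, h3⟩
  · rintro i ⟨S, hcard, hS⟩
    apply hnm i
    by_cases hn : (none : Option (Fin m)) ∈ S
    · have hu_not : u ∉ S.eraseNone := by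
        intro hmem
        rw [Finset.mem_eraseNone] at hmem
        have := hS none hn (some u) hmem (by simp)
        simp only [OAdj, Finset.mem_erase] at this
        exact this.1.1 rfl
      refine ⟨insert u S.eraseNone, ?_, ?_⟩
      · rw [Finset.card_insert_of_notMem hu_not]
        have h1 : (S.eraseNone.map Function.Embedding.some).card = (S.erase none).card := by
          rw [Finset.map_some_eraseNone]
        rw [Finset.card_map] at h1
        have hpos : 1 ≤ p i := hcard ▸ Finset.card_pos.mpr ⟨none, hn⟩
        rw [h1, Finset.card_erase_of_mem hn, hcard]
        omega
      · intro a ha b hb hne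
        refine ⟨hne, ?_⟩
        rcases Finset.mem_insert.mp ha with rfl | ha'
        · rcases Finset.mem_insert.mp hb with rfl | hb'
          · exact absurd rfl hne
          · rw [Finset.mem_eraseNone] at hb'
            exact (hS none hn (some b) hb' (by simp)).2
        · rw [Finset.mem_eraseNone] at ha'
          rcases Finset.mem_insert.mp hb with rfl | hb'
          · rw [hsym]
            exact (hS none hn (some a) ha' (by simp)).2
          · rw [Finset.mem_eraseNone] at hb'
            exact (hS (some a) ha' (some b) hb' (by simpa using hne)).2
    · refine ⟨S.eraseNone, ?_, ?_⟩
      · have h1 : (S.eraseNone.map Function.Embedding.some).card = (S.erase none).card := by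
          rw [Finset.map_some_eraseNone]
        rw [Finset.card_map] at h1
        rw [h1, Finset.erase_eq_of_notMem hn, hcard]
      · intro a ha b hb hne
        rw [Finset.mem_eraseNone] at ha hb
        exact ⟨hne, (hS (some a) ha (some b) hb (by simpa using hne)).2⟩
end

section
/- For every integer k ≥ 2, the Gallai-Ramsey number gr_k(K_3 : C_4) equals k + 4: every k-edge-coloring of K_{k+4} contains a rainbow triangle or a monochromatic C_4, and there exists a k-edge-coloring of K_{k+3} containing neither. -/
/-!
Lower bound: the 2-colouring of `K₅` whose colour classes are two pentagons has neither a rainbow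
triangle nor a monochromatic `C₄`, and adding a vertex joined to all others in a new colour keeps
both properties; `k - 2` such steps reach `K_{k+3}`.

Upper bound, for `#S ≥ #colours + 4`, by induction on the number of colours. Gallai's theorem
splits `S` into at least two parts, one colour between any two parts and only two colours between
parts. If all parts are singletons, `S` is 2-coloured and `R(C₄, C₄) = 6` applies. Otherwise let a
part `P` contain `a ≠ b`: two outside vertices seeing `P` in the same colour would close a `C₄`
through `a` and `b`, so at most two vertices lie outside `P`, in distinct colours. For `x ∉ P`, an
edge of colour `c x a` avoiding `x` then lies inside `P`, and it either closes a `C₄` with `x` or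
has twin endpoints `u, v` (`c u z = c v z` for all other `z`); but the more than `#colours` other
vertices cannot all see `u` in distinct colours, and two of them seeing `u` in the same colour form
a `C₄` with `u` and `v`. So deleting `x` deletes a colour.
-/

open Finset

variable {V : Type} {k : ℕ}

theorem eq_or_eq_or_eq_of_not_rainbowTri {c : V → V → Fin k} (hg : ¬ RainbowTri Full c)
    {a b d : V} (hab : a ≠ b) (had : a ≠ d) (hbd : b ≠ d) :
    c a b = c a d ∨ c a b = c b d ∨ c a d = c b d := by
  by_contra! h
  exact hg ⟨a, b, d, hab, had, hbd, h⟩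

theorem monoC4_of_common_neighbors {c : V → V → Fin k} (hc : ∀ a b, c a b = c b a)
    {γ : Fin k} {u v p q : V} (huv : u ≠ v) (hpq : p ≠ q) (hup : u ≠ p) (huq : u ≠ q)
    (hvp : v ≠ p) (hvq : v ≠ q) (hcup : c u p = γ) (hcuq : c u q = γ) (hcvp : c v p = γ)
    (hcvq : c v q = γ) : MonoC4 Full c :=
  ⟨u, p, v, q, hup, huv, huq, hvp.symm, hpq, hvq, hup, hvp.symm, hvq, huq.symm,
    hcup.trans ((hc p v).trans hcvp).symm, ((hc p v).trans hcvp).trans hcvq.symm,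
    hcvq.trans ((hc q u).trans hcuq).symm⟩

structure IsGallaiC4Free (c : V → V → Fin k) : Prop where
  symm : ∀ a b, c a b = c b a
  not_rainbowTri : ¬ RainbowTri Full c
  not_monoC4 : ¬ MonoC4 Full c

namespace IsGallaiC4Free

variable {c : V → V → Fin k}

theorem comap {W : Type} (h : IsGallaiC4Free c) (e : W ↪ V) :
    IsGallaiC4Free fun a b => c (e a) (e b) where
  symm a b := h.symm (e a) (e b)
  not_rainbowTri := fun ⟨a, b, d, hab, had, hbd, h1, h2, h3⟩ =>
    h.not_rainbowTri ⟨e a, e b, e d, e.injective.ne hab, e.injective.ne had,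
      e.injective.ne hbd, h1, h2, h3⟩
  not_monoC4 := fun ⟨a, b, d, f, hab, had, haf, hbd, hbf, hdf, _, _, _, _, h1, h2, h3⟩ =>
    h.not_monoC4 ⟨e a, e b, e d, e f, e.injective.ne hab, e.injective.ne had,
      e.injective.ne haf, e.injective.ne hbd, e.injective.ne hbf, e.injective.ne hdf,
      e.injective.ne hab, e.injective.ne hbd, e.injective.ne hdf, e.injective.ne haf.symm,
      h1, h2, h3⟩

theorem recolor {l : ℕ} (h : IsGallaiC4Free c) {g : Fin k → Fin l} (hg : Function.Injective g) :
    IsGallaiC4Free fun a b => g (c a b) where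
  symm a b := congrArg g (h.symm a b)
  not_rainbowTri := fun ⟨a, b, d, hab, had, hbd, h1, h2, h3⟩ =>
    h.not_rainbowTri ⟨a, b, d, hab, had, hbd, mt (congrArg g) h1, mt (congrArg g) h2,
      mt (congrArg g) h3⟩
  not_monoC4 := fun ⟨a, b, d, e, hab, had, hae, hbd, hbe, hde, h1, h2, h3, h4, e1, e2, e3⟩ =>
    h.not_monoC4 ⟨a, b, d, e, hab, had, hae, hbd, hbe, hde, h1, h2, h3, h4, hg e1, hg e2, hg e3⟩

end IsGallaiC4Free

def coneColoring (c : V → V → Fin k) (γ : Fin k) : Option V → Option V → Fin k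
  | some a, some b => c a b
  | _, _ => γ

theorem IsGallaiC4Free.cone {c : V → V → Fin k} (h : IsGallaiC4Free c) {γ : Fin k}
    (hγ : ∀ a b, c a b ≠ γ) : IsGallaiC4Free (coneColoring c γ) where
  symm a b := by cases a <;> cases b <;> simp [coneColoring, h.symm]
  not_rainbowTri := by
    rintro ⟨a, b, d, hab, had, hbd, h1, h2, h3⟩
    cases a <;> cases b <;> cases d <;> simp only [coneColoring] at h1 h2 h3
    case some.some.some a b d =>
      simp only [Full, ne_eq, Option.some.injEq] at hab had hbd
      exact h.not_rainbowTri ⟨a, b, d, hab, had, hbd, h1, h2, h3⟩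
    all_goals simp_all
  not_monoC4 := by
    rintro ⟨a, b, d, e, hab, had, hae, hbd, hbe, hde, -, -, -, -, e1, e2, e3⟩
    cases a <;> cases b <;> cases d <;> cases e <;> simp only [coneColoring] at e1 e2 e3
    case some.some.some.some a b d e =>
      simp only [ne_eq, Option.some.injEq] at hab had hae hbd hbe hde
      exact h.not_monoC4 ⟨a, b, d, e, hab, had, hae, hbd, hbe, hde, hab, hbd, hde, Ne.symm hae,
        e1, e2, e3⟩
    all_goals grind

def pentagonColoring (a b : Fin 5) : Fin 2 := if b - a = 1 ∨ a - b = 1 then 0 else 1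

theorem isGallaiC4Free_pentagonColoring : IsGallaiC4Free pentagonColoring := by
  refine ⟨by decide, ?_, ?_⟩
  · unfold RainbowTri Full; decide
  · unfold MonoC4 Full; decide

theorem exists_isGallaiC4Free {k : ℕ} (hk : 2 ≤ k) :
    ∃ c : Fin (k + 3) → Fin (k + 3) → Fin k, IsGallaiC4Free c := by
  induction k, hk using Nat.le_induction with
  | base => exact ⟨_, isGallaiC4Free_pentagonColoring⟩
  | succ k _ ih =>
    obtain ⟨c, hc⟩ := ih
    exact ⟨_, ((hc.recolor (Fin.castSucc_injective k)).cone
      fun a b => Fin.castSucc_ne_last _).comap (finSuccEquiv (k + 3)).toEmbedding⟩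

section TwoColored

variable [DecidableEq V] {c : V → V → Fin k} {X Y : Fin k} {S T : Finset V}

theorem exists_monoTriangle (h2 : ∀ x ∈ S, ∀ y ∈ S, x ≠ y → c x y = X ∨ c x y = Y)
    (hS : 6 ≤ #S) : ∃ γ, (γ = X ∨ γ = Y) ∧ ∃ a ∈ S, ∃ b ∈ S, ∃ d ∈ S,
      a ≠ b ∧ a ≠ d ∧ b ≠ d ∧ c a b = γ ∧ c a d = γ ∧ c b d = γ := by
  obtain ⟨z, hz⟩ : S.Nonempty := card_pos.1 (by omega)
  have hmaps : ∀ x ∈ S.erase z, c z x ∈ ({X, Y} : Finset (Fin k)) := fun x hx => by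
    simpa using h2 z hz x (mem_of_mem_erase hx) (ne_of_mem_erase hx).symm
  obtain ⟨γ, hγ, hcard⟩ := exists_lt_card_fiber_of_mul_lt_card_of_maps_to hmaps (n := 2) (by
    have := card_le_two (a := X) (b := Y)
    rw [card_erase_of_mem hz]; omega)
  obtain ⟨p, hp, q, hq, r, hr, hpq, hpr, hqr⟩ := two_lt_card.1 hcard
  simp only [mem_filter, mem_erase] at hp hq hr
  obtain ⟨⟨hpz, hpS⟩, hzp⟩ := hp
  obtain ⟨⟨hqz, hqS⟩, hzq⟩ := hq
  obtain ⟨⟨hrz, hrS⟩, hzr⟩ := hr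
  have hγ' : γ = X ∨ γ = Y := by simpa using hγ
  by_cases hpq' : c p q = γ
  · exact ⟨γ, hγ', z, hz, p, hpS, q, hqS, hpz.symm, hqz.symm, hpq, hzp, hzq, hpq'⟩
  by_cases hpr' : c p r = γ
  · exact ⟨γ, hγ', z, hz, p, hpS, r, hrS, hpz.symm, hrz.symm, hpr, hzp, hzr, hpr'⟩
  by_cases hqr' : c q r = γ
  · exact ⟨γ, hγ', z, hz, q, hqS, r, hrS, hqz.symm, hrz.symm, hqr, hzq, hzr, hqr'⟩
  have hpq₂ := h2 p hpS q hqS hpq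
  have hpr₂ := h2 p hpS r hrS hpr
  have hqr₂ := h2 q hqS r hrS hqr
  refine ⟨c p q, hpq₂, p, hpS, q, hqS, r, hrS, hpq, hpr, hqr, rfl, ?_, ?_⟩ <;> grind

theorem exists_mem_ne_ne {T : Finset V} (hT : 2 < #T) (s t : V) : ∃ r ∈ T, r ≠ s ∧ r ≠ t := by
  obtain ⟨r, hr, hrst⟩ :=
    exists_mem_notMem_of_card_lt_card ((card_le_two (a := s) (b := t)).trans_lt hT)
  exact ⟨r, hr, by simpa [not_or] using hrst⟩

theorem monoC4_or_exists_forall_color_eq (hc : ∀ a b, c a b = c b a)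
    (h2 : ∀ x ∈ S, ∀ y ∈ S, x ≠ y → c x y = X ∨ c x y = Y) (hTS : T ⊆ S) (hT : #T = 3)
    (hTX : ∀ s ∈ T, ∀ t ∈ T, s ≠ t → c s t = X) {w : V} (hwS : w ∈ S) (hwT : w ∉ T) :
    MonoC4 Full c ∨ ∃ t ∈ T, ∀ s ∈ T, s ≠ t → c w s = Y := by
  refine or_iff_not_imp_right.2 fun h => ?_
  push Not at h
  have hw {s} (hs : s ∈ T) : w ≠ s := (ne_of_mem_of_not_mem hs hwT).symm
  have hX {s} (hs : s ∈ T) (hY : c w s ≠ Y) : c w s = X :=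
    (h2 w hwS s (hTS hs) (hw hs)).resolve_right hY
  obtain ⟨t, ht⟩ : T.Nonempty := card_pos.1 (by omega)
  obtain ⟨s₁, hs₁, -, h₁⟩ := h t ht
  obtain ⟨s₂, hs₂, h₁₂, h₂⟩ := h s₁ hs₁
  obtain ⟨r, hr, hr₁, hr₂⟩ := exists_mem_ne_ne (by omega : 2 < #T) s₁ s₂
  exact monoC4_of_common_neighbors hc (hw hr) h₁₂.symm (hw hs₁) (hw hs₂) hr₁ hr₂ (hX hs₁ h₁)
    (hX hs₂ h₂)
    (hTX r hr s₁ hs₁ hr₁) (hTX r hr s₂ hs₂ hr₂)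

/- Each vertex `w` outside the `X`-triangle `T` sees all of `T` but one vertex `t w` in colour `Y`.
For three such vertices, `t` is injective and `c w (t w) = X`, so the outer vertices span a
`Y`-triangle, and `w₁, w₂` have the common `Y`-neighbours `w₃` and `t w₃`. -/
theorem monoC4_of_monoTriangle (hc : ∀ a b, c a b = c b a)
    (h2 : ∀ x ∈ S, ∀ y ∈ S, x ≠ y → c x y = X ∨ c x y = Y) (hS : 6 ≤ #S) (hTS : T ⊆ S)
    (hT : #T = 3) (hTX : ∀ s ∈ T, ∀ t ∈ T, s ≠ t → c s t = X) : MonoC4 Full c := by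
  by_contra hno
  choose! t ht htY using fun w (hw : w ∈ S \ T) =>
    (monoC4_or_exists_forall_color_eq hc h2 hTS hT hTX (mem_sdiff.1 hw).1
      (mem_sdiff.1 hw).2).resolve_left hno
  have ne_of_mem {w s} (hw : w ∈ S \ T) (hs : s ∈ T) : w ≠ s :=
    (ne_of_mem_of_not_mem hs (mem_sdiff.1 hw).2).symm
  have third := exists_mem_ne_ne (by omega : 2 < #T)
  have t_ne : ∀ w ∈ S \ T, ∀ w' ∈ S \ T, w ≠ w' → t w ≠ t w' := fun w hw w' hw' hww' h => by
    obtain ⟨p, hp, hpt, -⟩ := third (t w) (t w)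
    obtain ⟨q, hq, hqt, hqp⟩ := third (t w) p
    exact hno (monoC4_of_common_neighbors hc hww' hqp.symm (ne_of_mem hw hp) (ne_of_mem hw hq)
      (ne_of_mem hw' hp) (ne_of_mem hw' hq) (htY w hw p hp hpt) (htY w hw q hq hqt)
      (htY w' hw' p hp (h ▸ hpt)) (htY w' hw' q hq (h ▸ hqt)))
  have at_t : ∀ w ∈ S \ T, ∀ w' ∈ S \ T, w ≠ w' → c w (t w) = X := fun w hw w' hw' hww' => by
    refine (h2 w (mem_sdiff.1 hw).1 _ (hTS (ht w hw)) (ne_of_mem hw (ht w hw))).resolve_right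
      fun hY => hno ?_
    obtain ⟨r, hr, hrt, hrt'⟩ := third (t w) (t w')
    exact monoC4_of_common_neighbors hc hww' hrt.symm (ne_of_mem hw (ht w hw))
      (ne_of_mem hw hr) (ne_of_mem hw' (ht w hw)) (ne_of_mem hw' hr) hY (htY w hw r hr hrt)
      (htY w' hw' _ (ht w hw) (t_ne w hw w' hw' hww')) (htY w' hw' r hr hrt')
  have between : ∀ w ∈ S \ T, ∀ w' ∈ S \ T, w ≠ w' → c w w' = Y := fun w hw w' hw' hww' => by
    refine (h2 w (mem_sdiff.1 hw).1 w' (mem_sdiff.1 hw').1 hww').resolve_left fun hX => hno ?_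
    exact monoC4_of_common_neighbors hc (ne_of_mem hw (ht w' hw')) (ne_of_mem hw' (ht w hw))
      hww' (ne_of_mem hw (ht w hw)) (ne_of_mem hw' (ht w' hw')).symm
      (t_ne w hw w' hw' hww').symm hX (at_t w hw w' hw' hww')
      ((hc _ _).trans (at_t w' hw' w hw hww'.symm))
      (hTX _ (ht w' hw') _ (ht w hw) (t_ne w hw w' hw' hww').symm)
  obtain ⟨w₁, h₁, w₂, h₂, w₃, h₃, h₁₂, h₁₃, h₂₃⟩ := two_lt_card.1 (by
    rw [card_sdiff_of_subset hTS]; omega : 2 < #(S \ T))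
  exact hno (monoC4_of_common_neighbors hc h₁₂ (ne_of_mem h₃ (ht w₃ h₃)) h₁₃
    (ne_of_mem h₁ (ht w₃ h₃)) h₂₃ (ne_of_mem h₂ (ht w₃ h₃)) (between w₁ h₁ w₃ h₃ h₁₃)
    (htY w₁ h₁ _ (ht w₃ h₃) (t_ne w₃ h₃ w₁ h₁ h₁₃.symm)) (between w₂ h₂ w₃ h₃ h₂₃)
    (htY w₂ h₂ _ (ht w₃ h₃) (t_ne w₃ h₃ w₂ h₂ h₂₃.symm)))

theorem monoC4_of_two_colored (hc : ∀ a b, c a b = c b a)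
    (h2 : ∀ x ∈ S, ∀ y ∈ S, x ≠ y → c x y = X ∨ c x y = Y) (hS : 6 ≤ #S) : MonoC4 Full c := by
  obtain ⟨γ, hγ, a, ha, b, hb, d, hd, hab, had, hbd, h₁, h₂, h₃⟩ := exists_monoTriangle h2 hS
  have hT : ∀ s ∈ ({a, b, d} : Finset V), ∀ t ∈ ({a, b, d} : Finset V), s ≠ t → c s t = γ := by
    simp only [mem_insert, mem_singleton]
    rintro s (rfl | rfl | rfl) t (rfl | rfl | rfl) hst <;>
      first | exact absurd rfl hst | assumption | exact (hc _ _).trans ‹_›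
  have hTS : ({a, b, d} : Finset V) ⊆ S := by simp [insert_subset_iff, ha, hb, hd]
  have hT3 : #({a, b, d} : Finset V) = 3 := card_eq_three.2 ⟨a, b, d, hab, had, hbd, rfl⟩
  rcases hγ with rfl | rfl
  · exact monoC4_of_monoTriangle hc h2 hS hTS hT3 hT
  · exact monoC4_of_monoTriangle hc (fun x hx y hy hxy => (h2 x hx y hy hxy).symm) hS hTS hT3 hT

end TwoColored

section Gallai

/-- A Gallai partition of `S`, encoded by labelling each vertex with its part: the parts are the
fibres of `f` on `S`. -/
structure IsGallaiLabelling {ι : Type} (c : V → V → Fin k) (S : Finset V) (f : V → ι)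
    (α β : Fin k) : Prop where
  nontrivial : ∃ x ∈ S, ∃ y ∈ S, f x ≠ f y
  two_colored : ∀ x ∈ S, ∀ y ∈ S, f x ≠ f y → c x y = α ∨ c x y = β
  color_congr : ∀ x ∈ S, ∀ y ∈ S, ∀ y' ∈ S, f y = f y' → f x ≠ f y → c x y = c x y'

variable {ι : Type} {c : V → V → Fin k} {S : Finset V} {f : V → ι} {α β γ : Fin k}

theorem isGallaiLabelling_id (hS : 2 ≤ #S)
    (h2 : ∀ x ∈ S, ∀ y ∈ S, x ≠ y → c x y = α ∨ c x y = β) : IsGallaiLabelling c S id α β where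
  nontrivial := one_lt_card.1 hS
  two_colored := h2
  color_congr _ _ _ _ _ _ h _ := congrArg _ h

namespace IsGallaiLabelling

theorem exists_ne (hf : IsGallaiLabelling c S f α β) (v : V) : ∃ y ∈ S, f y ≠ f v := by
  obtain ⟨x, hx, y, hy, hxy⟩ := hf.nontrivial
  by_cases h : f x = f v
  · exact ⟨y, hy, h ▸ hxy.symm⟩
  · exact ⟨x, hx, h⟩

theorem comp {S' : Finset V} (hf : IsGallaiLabelling c S' f α β) {g : V → V}
    (hg : ∀ x ∈ S, g x ∈ S') (hsurj : ∀ y ∈ S', ∃ x ∈ S, g x = y)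
    (hcg : ∀ x ∈ S, ∀ y ∈ S, g x ≠ g y → c x y = c (g x) (g y)) :
    IsGallaiLabelling c S (f ∘ g) α β where
  nontrivial := by
    obtain ⟨_, hx, _, hy, hxy⟩ := hf.nontrivial
    obtain ⟨x, hx', rfl⟩ := hsurj _ hx
    obtain ⟨y, hy', rfl⟩ := hsurj _ hy
    exact ⟨x, hx', y, hy', hxy⟩
  two_colored x hx y hy hxy := by
    rw [hcg x hx y hy (ne_of_apply_ne f hxy)]
    exact hf.two_colored _ (hg x hx) _ (hg y hy) hxy
  color_congr x hx y hy y' hy' hyy' hxy := by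
    have hxy' : f (g x) ≠ f (g y') := fun h => hxy (h.trans hyy'.symm)
    rw [hcg x hx y hy (ne_of_apply_ne f hxy), hcg x hx y' hy' (ne_of_apply_ne f hxy'),
      hf.color_congr _ (hg x hx) _ (hg y hy) _ (hg y' hy') hyy' hxy]

end IsGallaiLabelling

def ColorReach (c : V → V → Fin k) (S : Finset V) (γ : Fin k) : V → V → Prop :=
  Relation.ReflTransGen fun u v => u ∈ S ∧ v ∈ S ∧ u ≠ v ∧ c u v = γ

theorem ColorReach.symm (hc : ∀ a b, c a b = c b a) {a b : V} (h : ColorReach c S γ a b) :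
    ColorReach c S γ b a :=
  haveI : Std.Symm fun u v => u ∈ S ∧ v ∈ S ∧ u ≠ v ∧ c u v = γ :=
    ⟨fun u v ⟨hu, hv, huv, h⟩ => ⟨hv, hu, huv.symm, (hc v u).trans h⟩⟩
  Std.Symm.symm (r := Relation.ReflTransGen _) _ _ h

theorem color_eq_of_not_colorReach (hc : ∀ a b, c a b = c b a) (hg : ¬ RainbowTri Full c)
    {a z u : V} (hz : z ∈ S) (hza : ¬ ColorReach c S γ a z) (hu : ColorReach c S γ a u) :
    c z u = c z a := by
  induction hu with
  | refl => rfl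
  | @tail u' u hu' hstep ih =>
    obtain ⟨hu'S, huS, hne, hcol⟩ := hstep
    have hu : ColorReach c S γ a u := hu'.tail ⟨hu'S, huS, hne, hcol⟩
    have hu'z : u' ≠ z := fun e => hza (e ▸ hu')
    have huz : u ≠ z := fun e => hza (e ▸ hu)
    have hzu' : c u' z ≠ γ := fun h => hza (hu'.tail ⟨hu'S, hz, hu'z, h⟩)
    have hzu : c u z ≠ γ := fun h => hza (hu.tail ⟨huS, hz, huz, h⟩)
    rcases eq_or_eq_or_eq_of_not_rainbowTri hg hne hu'z huz with h | h | h
    · exact absurd (h.symm.trans hcol) hzu'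
    · exact absurd (h.symm.trans hcol) hzu
    · rw [hc, ← h, hc, ih]

variable [DecidableEq V]

theorem exists_isGallaiLabelling_of_not_colorReach (hc : ∀ a b, c a b = c b a)
    (hg : ¬ RainbowTri Full c)
    (ih : ∀ S' ⊂ S, 2 ≤ #S' → ∃ f : V → V, ∃ α β, IsGallaiLabelling c S' f α β)
    {a b w : V} (ha : a ∈ S) (hb : b ∈ S) (hw : w ∈ S) (hab : a ≠ b)
    (haw : ¬ ColorReach c S (c a b) a w) : ∃ f : V → V, ∃ α β, IsGallaiLabelling c S f α β := by
  classical
  set C := S.filter (ColorReach c S (c a b) a)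
  have haC : a ∈ C := mem_filter.2 ⟨ha, .refl⟩
  have hbC : b ∈ C := mem_filter.2 ⟨hb, .single ⟨ha, hb, hab, rfl⟩⟩
  have hwC : w ∉ C := fun h => haw (mem_filter.1 h).2
  -- contract the component `C` to the single vertex `a`
  set S' := insert a (S \ C)
  have hS' : S' ⊂ S := by
    refine ssubset_iff_of_subset (insert_subset ha sdiff_subset) |>.2 ⟨b, hb, ?_⟩
    simp [hab.symm, hbC]
  have hS'2 : 2 ≤ #S' := by
    refine one_lt_card.2 ⟨a, mem_insert_self _ _, w, ?_, fun h => hwC (h ▸ haC)⟩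
    exact mem_insert_of_mem (mem_sdiff.2 ⟨hw, hwC⟩)
  obtain ⟨f, α, β, hf⟩ := ih S' hS' hS'2
  have hmod : ∀ z ∈ S, z ∉ C → ∀ u ∈ C, c z u = c z a := fun z hz hzC u hu =>
    color_eq_of_not_colorReach hc hg hz (fun h => hzC (mem_filter.2 ⟨hz, h⟩)) (mem_filter.1 hu).2
  refine ⟨f ∘ fun x => if x ∈ C then a else x, α, β, hf.comp ?_ ?_ ?_⟩
  · intro x hx
    split_ifs with h
    · exact mem_insert_self _ _
    · exact mem_insert_of_mem (mem_sdiff.2 ⟨hx, h⟩)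
  · intro y hy
    refine ⟨y, (insert_subset ha sdiff_subset) hy, ?_⟩
    split_ifs with h
    · exact ((mem_insert.1 hy).resolve_right fun h' => (mem_sdiff.1 h').2 h).symm
    · rfl
  · intro x hx y hy hxy
    split_ifs at hxy ⊢ with hxC hyC hyC
    · exact absurd rfl hxy
    · rw [hc, hmod y hy hyC x hxC, hc]
    · exact hmod x hx hxC y hyC
    · rfl

def ColorsConnected (c : V → V → Fin k) (S : Finset V) : Prop :=
  ∀ a ∈ S, ∀ b ∈ S, a ≠ b → ∀ x ∈ S, ColorReach c S (c a b) a x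

theorem ColorsConnected.exists_color_eq (hconn : ColorsConnected c S) (hc : ∀ a b, c a b = c b a)
    {a b w : V} (ha : a ∈ S) (hb : b ∈ S) (hab : a ≠ b) (hw : w ∈ S) :
    ∃ v ∈ S.erase w, c v w = c a b := by
  rcases (hconn a ha b hb hab w hw).cases_tail with rfl | ⟨v, -, hv, -, hvw, hcol⟩
  · exact ⟨b, mem_erase.2 ⟨hab.symm, hb⟩, hc b w⟩
  · exact ⟨v, mem_erase.2 ⟨hvw, hv⟩, hcol⟩

namespace IsGallaiLabelling

variable {w : V}

theorem exists_color_eq_of_colorReach (hf : IsGallaiLabelling c (S.erase w) f α β)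
    (hγα : γ ≠ α) (hγβ : γ ≠ β) {y : V} (hy : y ∈ S.erase w) (hyw : ColorReach c S γ y w) :
    ∃ z ∈ S.erase w, f z = f y ∧ c z w = γ := by
  induction hyw using Relation.ReflTransGen.head_induction_on with
  | refl => exact absurd hy (notMem_erase w S)
  | @head y y' hstep _ ih =>
    obtain ⟨-, hy'S, hne, hcol⟩ := hstep
    by_cases hy'w : y' = w
    · exact ⟨y, hy, rfl, hy'w ▸ hcol⟩
    have hy' : y' ∈ S.erase w := mem_erase.2 ⟨hy'w, hy'S⟩
    obtain ⟨z, hz, hzy', hzw⟩ := ih hy'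
    have hyy' : f y = f y' := by
      by_contra h
      rcases hf.two_colored y hy y' hy' h with h | h
      exacts [hγα (hcol.symm.trans h), hγβ (hcol.symm.trans h)]
    exact ⟨z, hz, hzy'.trans hyy'.symm, hzw⟩

theorem exists_fiber_color_eq (hf : IsGallaiLabelling c (S.erase w) f α β)
    (hc : ∀ a b, c a b = c b a) (hconn : ColorsConnected c S) (hw : w ∈ S) {a b : V}
    (ha : a ∈ S) (hb : b ∈ S) (hab : a ≠ b) (hα : c a b ≠ α) (hβ : c a b ≠ β) {y : V}
    (hy : y ∈ S.erase w) : ∃ z ∈ S.erase w, f z = f y ∧ c z w = c a b :=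
  hf.exists_color_eq_of_colorReach hα hβ hy
    (((hconn a ha b hb hab y (mem_of_mem_erase hy)).symm hc).trans (hconn a ha b hb hab w hw))

theorem color_eq_of_ne (hf : IsGallaiLabelling c (S.erase w) f α β)
    (hc : ∀ a b, c a b = c b a) (hg : ¬ RainbowTri Full c) (hconn : ColorsConnected c S)
    (hw : w ∈ S) {a b a' b' : V} (ha : a ∈ S) (hb : b ∈ S) (hab : a ≠ b) (ha' : a' ∈ S)
    (hb' : b' ∈ S) (hab' : a' ≠ b') (hα : c a b ≠ α) (hβ : c a b ≠ β) (hα' : c a' b' ≠ α)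
    (hβ' : c a' b' ≠ β) : c a b = c a' b' := by
  obtain ⟨y, hy, y', hy', hyy'⟩ := hf.nontrivial
  obtain ⟨z, hz, hzy, hzw⟩ := hf.exists_fiber_color_eq hc hconn hw ha hb hab hα hβ hy
  obtain ⟨z', hz', hzy', hzw'⟩ := hf.exists_fiber_color_eq hc hconn hw ha' hb' hab' hα' hβ' hy'
  have hzz' : f z ≠ f z' := by rwa [hzy, hzy']
  have hcross := hf.two_colored z hz z' hz' hzz'
  rcases eq_or_eq_or_eq_of_not_rainbowTri hg (ne_of_apply_ne f hzz') (ne_of_mem_erase hz)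
    (ne_of_mem_erase hz') with h | h | h
  · rw [h, hzw] at hcross; tauto
  · rw [h, hzw'] at hcross; tauto
  · rw [← hzw, ← hzw', h]

theorem eq_of_color_eq (hf : IsGallaiLabelling c (S.erase w) f α β)
    (hc : ∀ a b, c a b = c b a) (hg : ¬ RainbowTri Full c) (hconn : ColorsConnected c S)
    (hw : w ∈ S) {a b : V} (ha : a ∈ S) (hb : b ∈ S) (hab : a ≠ b) (hα : c a b ≠ α)
    (hβ : c a b ≠ β) {vα vβ : V} (hvα : vα ∈ S.erase w) (hvβ : vβ ∈ S.erase w)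
    (hvαw : c vα w = α) (hvβw : c vβ w = β) : α = β := by
  have cross : ∀ v ∈ S.erase w, c v w ≠ c a b → ∀ z ∈ S.erase w, f v ≠ f z → c z w = c a b →
      c v z = c v w := fun v hv hvw z hz hvz hzw => by
    have := hf.two_colored v hv z hz hvz
    rcases eq_or_eq_or_eq_of_not_rainbowTri hg (ne_of_apply_ne f hvz) (ne_of_mem_erase hv)
      (ne_of_mem_erase hz) with h | h | h
    · exact h
    · rw [h, hzw] at this; tauto
    · exact absurd (h.trans hzw) hvw
  have hα' : c vα w ≠ c a b := hvαw ▸ hα.symm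
  have hβ' : c vβ w ≠ c a b := hvβw ▸ hβ.symm
  by_cases hsame : f vα = f vβ
  · obtain ⟨y, hy, hyv⟩ := hf.exists_ne vα
    obtain ⟨z, hz, hzy, hzw⟩ := hf.exists_fiber_color_eq hc hconn hw ha hb hab hα hβ hy
    have hvz : f vα ≠ f z := hzy ▸ hyv.symm
    calc α = c vα z := (hvαw ▸ cross vα hvα hα' z hz hvz hzw).symm
      _ = c z vα := hc _ _
      _ = c z vβ := hf.color_congr z hz vα hvα vβ hvβ hsame hvz.symm
      _ = c vβ z := hc _ _
      _ = β := hvβw ▸ cross vβ hvβ hβ' z hz (hsame ▸ hvz) hzw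
  · obtain ⟨zβ, hzβ, hzβv, hzβw⟩ := hf.exists_fiber_color_eq hc hconn hw ha hb hab hα hβ hvβ
    obtain ⟨zα, hzα, hzαv, hzαw⟩ := hf.exists_fiber_color_eq hc hconn hw ha hb hab hα hβ hvα
    calc α = c vα zβ := (hvαw ▸ cross vα hvα hα' zβ hzβ (hzβv ▸ hsame) hzβw).symm
      _ = c vα vβ := hf.color_congr vα hvα zβ hzβ vβ hvβ hzβv (hzβv ▸ hsame)
      _ = c vβ vα := hc _ _
      _ = c vβ zα := (hf.color_congr vβ hvβ zα hzα vα hvα hzαv (hzαv ▸ Ne.symm hsame)).symm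
      _ = β := hvβw ▸ cross vβ hvβ hβ' zα hzα (hzαv ▸ Ne.symm hsame) hzαw

theorem exists_two_colored (hf : IsGallaiLabelling c (S.erase w) f α β)
    (hc : ∀ a b, c a b = c b a) (hg : ¬ RainbowTri Full c) (hconn : ColorsConnected c S)
    (hw : w ∈ S) : ∃ α' β', ∀ x ∈ S, ∀ y ∈ S, x ≠ y → c x y = α' ∨ c x y = β' := by
  by_contra! h
  obtain ⟨a, ha, b, hb, hab, hα, hβ⟩ := h α β
  have outside : ∀ x ∈ S, ∀ y ∈ S, x ≠ y → c x y ≠ α → c x y ≠ β → c x y = c a b :=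
    fun x hx y hy hxy hxα hxβ =>
      hf.color_eq_of_ne hc hg hconn hw hx hy hxy ha hb hab hxα hxβ hα hβ
  obtain ⟨a₁, ha₁, b₁, hb₁, hab₁, h₁α, h₁⟩ := h α (c a b)
  obtain ⟨a₂, ha₂, b₂, hb₂, hab₂, h₂β, h₂⟩ := h β (c a b)
  have h₁β : c a₁ b₁ = β := by_contra fun h₁β => h₁ (outside a₁ ha₁ b₁ hb₁ hab₁ h₁α h₁β)
  have h₂α : c a₂ b₂ = α := by_contra fun h₂α => h₂ (outside a₂ ha₂ b₂ hb₂ hab₂ h₂α h₂β)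
  obtain ⟨vβ, hvβ, hvβw⟩ := hconn.exists_color_eq hc ha₁ hb₁ hab₁ hw
  obtain ⟨vα, hvα, hvαw⟩ := hconn.exists_color_eq hc ha₂ hb₂ hab₂ hw
  exact h₁α (h₁β.trans (hf.eq_of_color_eq hc hg hconn hw ha hb hab hα hβ hvα hvβ
    (hvαw.trans h₂α) (hvβw.trans h₁β)).symm)

end IsGallaiLabelling

/- If some colour class on `S` is disconnected, contracting one of its components to a vertex
gives a smaller set; otherwise a Gallai partition of `S \ {w}` forces `S` to be 2-coloured. -/
theorem exists_isGallaiLabelling (hc : ∀ a b, c a b = c b a) (hg : ¬ RainbowTri Full c)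
    (S : Finset V) (hS : 2 ≤ #S) : ∃ f : V → V, ∃ α β, IsGallaiLabelling c S f α β := by
  induction S using Finset.strongInduction with
  | H S ih =>
  by_cases hdis : ∃ a ∈ S, ∃ b ∈ S, a ≠ b ∧ ∃ w ∈ S, ¬ ColorReach c S (c a b) a w
  · obtain ⟨a, ha, b, hb, hab, w, hw, haw⟩ := hdis
    exact exists_isGallaiLabelling_of_not_colorReach hc hg ih ha hb hw hab haw
  have hconn : ColorsConnected c S := fun a ha b hb hab w hw =>
    by_contra fun h => hdis ⟨a, ha, b, hb, hab, w, hw, h⟩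
  obtain ⟨α, β, h2⟩ : ∃ α β, ∀ x ∈ S, ∀ y ∈ S, x ≠ y → c x y = α ∨ c x y = β := by
    rcases hS.eq_or_lt with hS | hS
    · obtain ⟨u, v, -, rfl⟩ := card_eq_two.1 hS.symm
      refine ⟨c u v, c v u, ?_⟩
      simp only [mem_insert, mem_singleton]
      rintro x (rfl | rfl) y (rfl | rfl) hxy <;> simp_all
    · obtain ⟨w, hw⟩ : S.Nonempty := card_pos.1 (by omega)
      obtain ⟨f, α, β, hf⟩ :=
        ih (S.erase w) (erase_ssubset hw) (by rw [card_erase_of_mem hw]; omega)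
      exact hf.exists_two_colored hc hg hconn hw
  exact ⟨id, α, β, isGallaiLabelling_id hS h2⟩

end Gallai

section UpperBound

variable [DecidableEq V] {c : V → V → Fin k} {CS : Finset (Fin k)} {S : Finset V}

theorem monoC4_of_twins (hc : ∀ a b, c a b = c b a)
    (hCS : ∀ x ∈ S, ∀ y ∈ S, x ≠ y → c x y ∈ CS) (hcard : #CS + 3 ≤ #S) {u v : V}
    (hu : u ∈ S) (hv : v ∈ S) (huv : u ≠ v) (htwin : ∀ z ∈ S, z ≠ u → z ≠ v → c u z = c v z) :
    MonoC4 Full c := by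
  have hlt : #CS < #((S.erase u).erase v) := by
    rw [card_erase_of_mem (mem_erase.2 ⟨huv.symm, hv⟩), card_erase_of_mem hu]; omega
  obtain ⟨z, hz, z', hz', hzz', heq⟩ := exists_ne_map_eq_of_card_lt_of_maps_to hlt
    (f := c u) fun z hz => by
      have hz := mem_of_mem_erase hz
      exact hCS u hu z (mem_of_mem_erase hz) (ne_of_mem_erase hz).symm
  simp only [mem_erase] at hz hz'
  exact monoC4_of_common_neighbors hc hzz' huv hz.2.1 hz.1 hz'.2.1 hz'.1 (hc z u)
    ((hc z v).trans (htwin z hz.2.2 hz.2.1 hz.1).symm) ((hc z' u).trans heq.symm)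
    ((hc z' v).trans ((htwin z' hz'.2.2 hz'.2.1 hz'.1).symm.trans heq.symm))

namespace IsGallaiLabelling

variable {ι : Type} {f : V → ι} {α β : Fin k}

theorem monoC4_of_color_eq (hf : IsGallaiLabelling c S f α β) (hc : ∀ a b, c a b = c b a)
    (hg : ¬ RainbowTri Full c) (hCS : ∀ x ∈ S, ∀ y ∈ S, x ≠ y → c x y ∈ CS)
    (hcard : #CS + 3 ≤ #S) {x u v : V} (hx : x ∈ S) (hu : u ∈ S) (hv : v ∈ S) (huv : u ≠ v)
    (hfuv : f u = f v) (hxu : f x ≠ f u) (hcol : c u v = c x u) : MonoC4 Full c := by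
  have hxv : c x v = c x u := (hf.color_congr x hx u hu v hv hfuv hxu).symm
  have hne {z} (hz : f z = f u) : x ≠ z := ne_of_apply_ne f (hz ▸ hxu)
  by_cases hz : ∃ z ∈ S, f z = f u ∧ z ≠ u ∧ z ≠ v ∧ (c u z = c x u ∨ c v z = c x u)
  · obtain ⟨z, hz, hzu, hzu', hzv', hcz⟩ := hz
    have hxz : c x z = c x u := (hf.color_congr x hx u hu z hz hzu.symm hxu).symm
    rcases hcz with hcz | hcz
    · exact monoC4_of_common_neighbors hc (hne rfl) hzv' (hne hzu) (hne hfuv.symm) hzu'.symm huv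
        hxz hxv hcz hcol
    · exact monoC4_of_common_neighbors hc (hne hfuv.symm) hzu' (hne hzu) (hne rfl) hzv'.symm
        huv.symm hxz rfl hcz ((hc v u).trans hcol)
  push Not at hz
  refine monoC4_of_twins hc hCS hcard hu hv huv fun z hzS hzu hzv => ?_
  by_cases hfz : f z = f u
  · rcases eq_or_eq_or_eq_of_not_rainbowTri hg huv hzu.symm hzv.symm with h | h | h
    · exact absurd (h.symm.trans hcol) (hz z hzS hfz hzu hzv).1
    · exact absurd (h.symm.trans hcol) (hz z hzS hfz hzu hzv).2
    · exact h
  · rw [hc u, hc v]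
    exact hf.color_congr z hzS u hu v hv hfuv hfz

theorem monoC4_or_forall_color_ne (hf : IsGallaiLabelling c S f α β)
    (hc : ∀ a b, c a b = c b a) (hg : ¬ RainbowTri Full c)
    (hCS : ∀ x ∈ S, ∀ y ∈ S, x ≠ y → c x y ∈ CS) (hcard : #CS + 3 ≤ #S) {a b x : V}
    (ha : a ∈ S) (hb : b ∈ S) (hab : a ≠ b) (hfab : f a = f b) (hx : x ∈ S) (hxa : f x ≠ f a) :
    MonoC4 Full c ∨ ∀ u ∈ S.erase x, ∀ v ∈ S.erase x, u ≠ v → c u v ≠ c x a := by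
  refine or_iff_not_imp_left.2 fun hno u hu v hv huv hcol => hno ?_
  have outside : ∀ y ∈ S, ∀ y' ∈ S, y ≠ y' → f y ≠ f a → f y' ≠ f a → c y a = c y' a →
      MonoC4 Full c := fun y hy y' hy' hyy' hya hy'a h =>
    monoC4_of_common_neighbors hc hyy' hab (ne_of_apply_ne f hya) (ne_of_apply_ne f (hfab ▸ hya))
      (ne_of_apply_ne f hy'a) (ne_of_apply_ne f (hfab ▸ hy'a)) rfl
      (hf.color_congr y hy a ha b hb hfab hya).symm h.symm
      ((hf.color_congr y' hy' a ha b hb hfab hy'a).symm.trans h.symm)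
  have mixed : ∀ u ∈ S.erase x, ∀ v ∈ S, f u ≠ f a → f v = f a → c u v = c x a →
      MonoC4 Full c := fun u hu v hv hua hva h =>
    outside u (mem_of_mem_erase hu) x hx (ne_of_mem_erase hu) hua hxa
      ((hf.color_congr u (mem_of_mem_erase hu) v hv a ha hva (hva ▸ hua)).symm.trans h)
  have hu' := mem_of_mem_erase hu
  have hv' := mem_of_mem_erase hv
  by_cases hua : f u = f a <;> by_cases hva : f v = f a
  · exact hf.monoC4_of_color_eq hc hg hCS hcard hx hu' hv' huv (hua.trans hva.symm)
      (hua ▸ hxa) (hcol.trans (hf.color_congr x hx a ha u hu' hua.symm hxa))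
  · exact mixed v hv u hu' hva hua ((hc v u).trans hcol)
  · exact mixed u hu v hv' hua hva hcol
  · have hx₂ := hf.two_colored x hx a ha hxa
    have hu₂ := hf.two_colored u hu' a ha hua
    have hv₂ := hf.two_colored v hv' a ha hva
    by_cases h₁ : c x a = c u a
    · exact outside x hx u hu' (ne_of_mem_erase hu).symm hxa hua h₁
    by_cases h₂ : c x a = c v a
    · exact outside x hx v hv' (ne_of_mem_erase hv).symm hxa hva h₂
    by_cases h₃ : c u a = c v a
    · exact outside u hu' v hv' huv hua hva h₃
    grind

end IsGallaiLabelling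

theorem monoC4_of_card_add_four_le (hc : ∀ a b, c a b = c b a) (hg : ¬ RainbowTri Full c)
    (CS : Finset (Fin k)) (S : Finset V) (hCS : ∀ x ∈ S, ∀ y ∈ S, x ≠ y → c x y ∈ CS)
    (hcard : #CS + 4 ≤ #S) : MonoC4 Full c := by
  induction CS using Finset.strongInduction generalizing S with
  | H CS ih =>
  obtain ⟨u, hu, v, hv, huv⟩ := one_lt_card.1 (by omega : 1 < #S)
  rcases le_or_gt #CS 1 with h1 | h1
  · exact monoC4_of_twins hc hCS (by omega) hu hv huv fun z hz hzu hzv =>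
      card_le_one.1 h1 _ (hCS u hu z hz hzu.symm) _ (hCS v hv z hz hzv.symm)
  obtain ⟨f, α, β, hf⟩ := exists_isGallaiLabelling hc hg S (by omega)
  by_cases hpart : ∃ a ∈ S, ∃ b ∈ S, a ≠ b ∧ f a = f b
  · obtain ⟨a, ha, b, hb, hab, hfab⟩ := hpart
    obtain ⟨x, hx, hxa⟩ := hf.exists_ne a
    have hxaCS : c x a ∈ CS := hCS x hx a ha (ne_of_apply_ne f hxa)
    obtain h | hfree := hf.monoC4_or_forall_color_ne hc hg hCS (by omega) ha hb hab hfab hx hxa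
    · exact h
    refine ih _ (erase_ssubset hxaCS) (S.erase x) (fun y hy z hz hyz => mem_erase.2
      ⟨hfree y hy z hz hyz, hCS y (mem_of_mem_erase hy) z (mem_of_mem_erase hz) hyz⟩) ?_
    rw [card_erase_of_mem hxaCS, card_erase_of_mem hx]
    omega
  · push Not at hpart
    exact monoC4_of_two_colored hc (fun x hx y hy hxy => hf.two_colored x hx y hy
      (hpart x hx y hy hxy)) (by omega)

end UpperBound

theorem stmt6 (k : ℕ) (hk : 2 ≤ k) :
    IsLeast {n | ∀ c : Fin n → Fin n → Fin k, (∀ a b, c a b = c b a) →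
      RainbowTri Full c ∨ MonoC4 Full c} (k + 4) := by
  constructor
  · intro c hc
    by_cases hg : RainbowTri Full c
    · exact Or.inl hg
    · exact Or.inr (monoC4_of_card_add_four_le hc hg univ univ (by simp) (by simp))
  · intro n hn
    by_contra! hlt
    obtain ⟨c, hc⟩ := exists_isGallaiC4Free hk
    have hc' := hc.comap (Fin.castLEEmb (by omega : n ≤ k + 3))
    exact (hn _ hc'.symm).elim hc'.not_rainbowTri hc'.not_monoC4
end

section
/- For every positive integer k, gr_k(K_3 : P_4) = k + 3: every k-edge-coloring of K_{k+3} contains a rainbow triangle or a monochromatic path on 4 vertices, and there exists a k-edge-coloring of K_{k+2} containing neither. -/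
/-!
Upper bound: if a colouring of a finite vertex set `S` has no rainbow triangle and no
monochromatic `P₄`, then `|S|` is at most the number of colours used on `S` plus two.
Pick `v ∈ S`. If the edges at `v` all have distinct colours we are done. Otherwise let `L` be
the set of vertices joined to `v` in a repeated colour `i`, and `O` the other vertices `w ≠ v`.
Forbidding `P₄`s and rainbow triangles forces each `w ∈ O` to see `v` and all of `L` in a
single colour, which is different for different `w`, differs from `i`, and is not used inside
`L`. Either `i` is used inside `L`, and then `|L| = 2`, or induction applies to `L`.

Lower bound: on `K_{k+2}` with vertices `0, …, k+1`, colour the edge `ab` by `min (min a b) (k - 1)`.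
Each colour class is a star or the triangle on `{k-1, k, k+1}`, and every triangle repeats
the colour of its smallest vertex.
-/

open Finset

section ColorBound

variable {V α : Type*}

def colorsOn [DecidableEq V] [DecidableEq α] (c : V → V → α) (S : Finset V) : Finset α :=
  S.offDiag.image fun p => c p.1 p.2

def NoRainbowTriOn (c : V → V → α) (S : Finset V) : Prop :=
  ∀ a ∈ S, ∀ b ∈ S, ∀ d ∈ S, a ≠ b → a ≠ d → b ≠ d →
    c a b = c a d ∨ c a b = c b d ∨ c a d = c b d

def NoMonoP4On (c : V → V → α) (S : Finset V) : Prop :=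
  ∀ a ∈ S, ∀ b ∈ S, ∀ d ∈ S, ∀ e ∈ S, a ≠ b → a ≠ d → a ≠ e → b ≠ d → b ≠ e → d ≠ e →
    c a b = c b d → c b d ≠ c d e

variable {c : V → V → α} {S T : Finset V}

theorem NoRainbowTriOn.mono (h : NoRainbowTriOn c S) (hTS : T ⊆ S) : NoRainbowTriOn c T :=
  fun a ha b hb d hd => h a (hTS ha) b (hTS hb) d (hTS hd)

theorem NoMonoP4On.mono (h : NoMonoP4On c S) (hTS : T ⊆ S) : NoMonoP4On c T :=
  fun a ha b hb d hd e he => h a (hTS ha) b (hTS hb) d (hTS hd) e (hTS he)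

variable [DecidableEq V] [DecidableEq α]

theorem mem_colorsOn {i : α} : i ∈ colorsOn c S ↔ ∃ a ∈ S, ∃ b ∈ S, a ≠ b ∧ c a b = i := by
  simp [colorsOn, and_assoc]

theorem mem_colorsOn_of {a b : V} (ha : a ∈ S) (hb : b ∈ S) (hab : a ≠ b) :
    c a b ∈ colorsOn c S :=
  mem_colorsOn.2 ⟨a, ha, b, hb, hab, rfl⟩

theorem colorsOn_mono (hTS : T ⊆ S) : colorsOn c T ⊆ colorsOn c S :=
  image_subset_image (offDiag_mono hTS)

theorem card_le_card_colorsOn_add_one_of_injOn {v : V} (hv : v ∈ S)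
    (hinj : Set.InjOn (c v) (S.erase v)) : #S ≤ #(colorsOn c S) + 1 := by
  have hmaps : Set.MapsTo (c v) (S.erase v) (colorsOn c S) := fun x hx =>
    mem_colorsOn_of hv (mem_of_mem_erase hx) (ne_of_mem_erase hx).symm
  have := card_le_card_of_injOn (c v) hmaps hinj
  rw [card_erase_of_mem hv] at this
  omega

def colorNbhd (c : V → V → α) (S : Finset V) (v : V) (i : α) : Finset V :=
  (S.erase v).filter (c v · = i)

theorem mem_colorNbhd {v x : V} {i : α} :
    x ∈ colorNbhd c S v i ↔ x ∈ S ∧ x ≠ v ∧ c v x = i := by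
  simp only [colorNbhd, mem_filter, mem_erase]
  tauto

theorem colorNbhd_subset {v : V} {i : α} : colorNbhd c S v i ⊆ S :=
  (filter_subset _ _).trans (erase_subset _ _)

theorem colorNbhd_ssubset {v : V} {i : α} (hv : v ∈ S) : colorNbhd c S v i ⊂ S :=
  ssubset_of_subset_of_ne colorNbhd_subset fun h => (mem_colorNbhd.1 (h ▸ hv)).2.1 rfl

def offColorNbhd (c : V → V → α) (S : Finset V) (v : V) (i : α) : Finset V :=
  (S.erase v).filter (c v · ≠ i)

theorem mem_offColorNbhd {v w : V} {i : α} :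
    w ∈ offColorNbhd c S v i ↔ w ∈ S ∧ w ≠ v ∧ c v w ≠ i := by
  simp only [offColorNbhd, mem_filter, mem_erase]
  tauto

theorem card_colorNbhd_add_card_offColorNbhd {v : V} (hv : v ∈ S) (i : α) :
    1 + #(colorNbhd c S v i) + #(offColorNbhd c S v i) = #S := by
  rw [colorNbhd, offColorNbhd, add_assoc, card_filter_add_card_filter_not, card_erase_of_mem hv]
  have := card_pos.2 ⟨v, hv⟩
  omega

section RepeatedColor

variable {v : V} {i : α} (hsym : ∀ a b, c a b = c b a) (hR : NoRainbowTriOn c S)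
  (hP : NoMonoP4On c S) (hv : v ∈ S) (hL : 1 < #(colorNbhd c S v i))

theorem ne_of_mem_colorNbhd_of_mem_offColorNbhd {x w : V} (hx : x ∈ colorNbhd c S v i)
    (hw : w ∈ offColorNbhd c S v i) : x ≠ w := by
  rintro rfl
  exact (mem_offColorNbhd.1 hw).2.2 (mem_colorNbhd.1 hx).2.2

include hsym hP hv hL in
theorem color_ne_of_mem_colorNbhd {w x : V} (hw : w ∈ offColorNbhd c S v i)
    (hx : x ∈ colorNbhd c S v i) : c w x ≠ i := by
  intro hwx
  obtain ⟨y, hy, hyx⟩ := exists_mem_ne hL x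
  obtain ⟨hxS, hxv, hvx⟩ := mem_colorNbhd.1 hx
  obtain ⟨hyS, hyv, hvy⟩ := mem_colorNbhd.1 hy
  obtain ⟨hwS, hwv, -⟩ := mem_offColorNbhd.1 hw
  exact hP w hwS x hxS v hv y hyS (ne_of_mem_colorNbhd_of_mem_offColorNbhd hx hw).symm hwv
    (ne_of_mem_colorNbhd_of_mem_offColorNbhd hy hw).symm hxv hyx.symm hyv.symm
    (by rw [hwx, hsym, hvx]) (by rw [hsym, hvx, hvy])

include hsym hR hP hv hL in
theorem color_eq_of_mem_colorNbhd {w x : V} (hw : w ∈ offColorNbhd c S v i)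
    (hx : x ∈ colorNbhd c S v i) : c w v = c w x := by
  obtain ⟨hxS, hxv, hvx⟩ := mem_colorNbhd.1 hx
  obtain ⟨hwS, hwv, hwi⟩ := mem_offColorNbhd.1 hw
  obtain h | h | h := hR w hwS v hv x hxS hwv
    (ne_of_mem_colorNbhd_of_mem_offColorNbhd hx hw).symm hxv.symm
  · exact h
  · exact absurd (hsym v w ▸ h.trans hvx) hwi
  · exact absurd (h.trans hvx) (color_ne_of_mem_colorNbhd hsym hP hv hL hw hx)

include hsym hR hP hv hL in
theorem injOn_offColorNbhd : Set.InjOn (c · v) (offColorNbhd c S v i) := by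
  intro w₁ hw₁ w₂ hw₂ heq
  by_contra hne
  obtain ⟨x, hx⟩ : (colorNbhd c S v i).Nonempty := card_pos.1 (by omega)
  obtain ⟨hw₁S, hw₁v, -⟩ := mem_offColorNbhd.1 hw₁
  obtain ⟨hw₂S, hw₂v, -⟩ := mem_offColorNbhd.1 hw₂
  obtain ⟨hxS, hxv, -⟩ := mem_colorNbhd.1 hx
  exact hP x hxS w₁ hw₁S v hv w₂ hw₂S (ne_of_mem_colorNbhd_of_mem_offColorNbhd hx hw₁) hxv
    (ne_of_mem_colorNbhd_of_mem_offColorNbhd hx hw₂) hw₁v hne hw₂v.symm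
    (by rw [hsym x, ← color_eq_of_mem_colorNbhd hsym hR hP hv hL hw₁ hx])
    (by rw [hsym v]; exact heq)

include hsym hR hP hv hL in
theorem color_notMem_colorsOn_colorNbhd {w : V} (hw : w ∈ offColorNbhd c S v i) :
    c w v ∉ colorsOn c (colorNbhd c S v i) := by
  intro h
  obtain ⟨x, hx, y, hy, hxy, hxyw⟩ := mem_colorsOn.1 h
  obtain ⟨hxS, hxv, -⟩ := mem_colorNbhd.1 hx
  obtain ⟨hyS, hyv, -⟩ := mem_colorNbhd.1 hy
  obtain ⟨hwS, hwv, -⟩ := mem_offColorNbhd.1 hw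
  have hyw : c y w = c w v := by rw [hsym, color_eq_of_mem_colorNbhd hsym hR hP hv hL hw hy]
  exact hP x hxS y hyS w hwS v hv hxy (ne_of_mem_colorNbhd_of_mem_offColorNbhd hx hw) hxv
    (ne_of_mem_colorNbhd_of_mem_offColorNbhd hy hw) hyv hwv (hxyw.trans hyw.symm) hyw

include hsym hP hv in
theorem card_colorNbhd_le_two_of_mem_colorsOn (h : i ∈ colorsOn c (colorNbhd c S v i)) :
    #(colorNbhd c S v i) ≤ 2 := by
  obtain ⟨x, hx, y, hy, hxy, hxyi⟩ := mem_colorsOn.1 h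
  obtain ⟨hxS, hxv, hvx⟩ := mem_colorNbhd.1 hx
  obtain ⟨hyS, hyv, -⟩ := mem_colorNbhd.1 hy
  by_contra! hlt
  obtain ⟨z, hz, hzxy⟩ := exists_mem_notMem_of_card_lt_card (card_le_two.trans_lt hlt)
  obtain ⟨hzS, hzv, hvz⟩ := mem_colorNbhd.1 hz
  simp only [mem_insert, mem_singleton, not_or] at hzxy
  exact hP z hzS v hv x hxS y hyS hzv hzxy.1 hzxy.2 hxv.symm hyv.symm hxy
    (by rw [hsym, hvz, hvx]) (by rw [hvx, hxyi])

include hsym hR hP hv hL in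
theorem card_le_card_colorsOn_add_two_of_colorNbhd
    (hLi : #(colorNbhd c S v i) ≤ #((colorsOn c (colorNbhd c S v i)).erase i) + 2) :
    #S ≤ #(colorsOn c S) + 2 := by
  have hS := card_colorNbhd_add_card_offColorNbhd (c := c) hv i
  set L := colorNbhd c S v i
  set O := offColorNbhd c S v i with hO
  have hdisj : Disjoint ((colorsOn c L).erase i) (O.image (c · v)) := by
    rw [disjoint_right]
    rintro _ h
    obtain ⟨w, hw, rfl⟩ := mem_image.1 h
    exact fun h' => color_notMem_colorsOn_colorNbhd hsym hR hP hv hL hw (mem_of_mem_erase h')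
  have hi : i ∉ (colorsOn c L).erase i ∪ O.image (c · v) := by
    simp only [mem_union, mem_image, notMem_erase, false_or, not_exists, not_and]
    intro w hw hwi
    exact (mem_offColorNbhd.1 hw).2.2 (hsym v w ▸ hwi)
  have hsub : insert i ((colorsOn c L).erase i ∪ O.image (c · v)) ⊆ colorsOn c S := by
    obtain ⟨x, hx⟩ : L.Nonempty := card_pos.1 (by omega)
    obtain ⟨hxS, hxv, hvx⟩ := mem_colorNbhd.1 hx
    refine insert_subset (hvx ▸ mem_colorsOn_of hv hxS hxv.symm) (union_subset
      ((erase_subset _ _).trans (colorsOn_mono colorNbhd_subset)) ?_)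
    intro _ h
    obtain ⟨w, hw, rfl⟩ := mem_image.1 h
    obtain ⟨hwS, hwv, -⟩ := mem_offColorNbhd.1 hw
    exact mem_colorsOn_of hwS hv hwv
  have hcard := card_le_card hsub
  rw [card_insert_of_notMem hi, card_union_of_disjoint hdisj,
    card_image_of_injOn (injOn_offColorNbhd hsym hR hP hv hL), ← hO] at hcard
  omega

end RepeatedColor

theorem card_le_card_colorsOn_add_two (hsym : ∀ a b, c a b = c b a) (hR : NoRainbowTriOn c S)
    (hP : NoMonoP4On c S) : #S ≤ #(colorsOn c S) + 2 := by
  induction S using Finset.strongInduction with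
  | H S ih =>
  obtain rfl | ⟨v, hv⟩ := S.eq_empty_or_nonempty
  · simp
  by_cases hinj : Set.InjOn (c v) (S.erase v)
  · exact (card_le_card_colorsOn_add_one_of_injOn hv hinj).trans (by omega)
  obtain ⟨x, hxS, hxv, y, hyS, hyv, hvxy, hxy⟩ :
      ∃ x ∈ S, x ≠ v ∧ ∃ y ∈ S, y ≠ v ∧ c v x = c v y ∧ x ≠ y := by
    simpa [Set.InjOn] using hinj
  have hL : 1 < #(colorNbhd c S v (c v x)) :=
    one_lt_card.2 ⟨x, mem_colorNbhd.2 ⟨hxS, hxv, rfl⟩, y, mem_colorNbhd.2 ⟨hyS, hyv, hvxy.symm⟩, hxy⟩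
  refine card_le_card_colorsOn_add_two_of_colorNbhd hsym hR hP hv hL ?_
  by_cases hi : c v x ∈ colorsOn c (colorNbhd c S v (c v x))
  · exact (card_colorNbhd_le_two_of_mem_colorsOn hsym hP hv hi).trans (by omega)
  · rw [erase_eq_of_notMem hi]
    exact ih _ (colorNbhd_ssubset hv) (hR.mono colorNbhd_subset) (hP.mono colorNbhd_subset)

end ColorBound

section Upper

variable {V : Type} [Fintype V] {k : ℕ} {c : V → V → Fin k}

theorem noRainbowTriOn_univ (h : ¬RainbowTri Full c) : NoRainbowTriOn c univ := by
  intro a _ b _ d _ hab had hbd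
  by_contra! hne
  exact h ⟨a, b, d, hab, had, hbd, hne⟩

theorem noMonoP4On_univ (h : ¬MonoP4 Full c) : NoMonoP4On c univ :=
  fun a _ b _ d _ e _ hab had hae hbd hbe hde h₁ h₂ =>
    h ⟨a, b, d, e, hab, had, hae, hbd, hbe, hde, hab, hbd, hde, h₁, h₂⟩

theorem rainbowTri_or_monoP4 [DecidableEq V] (hV : Fintype.card V = k + 3)
    (hsym : ∀ a b, c a b = c b a) : RainbowTri Full c ∨ MonoP4 Full c := by
  by_contra h
  obtain ⟨hR, hP⟩ := not_or.1 h
  have hS := card_le_card_colorsOn_add_two hsym (noRainbowTriOn_univ hR) (noMonoP4On_univ hP)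
  have hC := card_le_univ (colorsOn c univ)
  rw [Fintype.card_fin] at hC
  rw [card_univ] at hS
  omega

end Upper

section Lower

variable {n m : ℕ}

def minColoring (n m : ℕ) (a b : Fin n) : Fin (m + 1) :=
  ⟨min (min a b) m, Nat.lt_succ_of_le (min_le_right _ _)⟩

theorem minColoring_comm (a b : Fin n) : minColoring n m a b = minColoring n m b a := by
  simp [minColoring, min_comm]

theorem not_rainbowTri_minColoring : ¬RainbowTri Full (minColoring n m) := by
  rintro ⟨a, b, d, -, -, -, h₁, h₂, h₃⟩
  simp only [minColoring, ne_eq, Fin.mk.injEq] at h₁ h₂ h₃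
  omega

theorem not_monoP4_minColoring (hn : n ≤ m + 3) : ¬MonoP4 Full (minColoring n m) := by
  rintro ⟨a, b, d, e, hab, had, hae, hbd, hbe, hde, -, -, -, h₁, h₂⟩
  simp only [minColoring, Fin.mk.injEq] at h₁ h₂
  simp only [ne_eq, Fin.ext_iff] at hab had hae hbd hbe hde
  omega

end Lower

theorem stmt8 (k : ℕ) (hk : 1 ≤ k) :
    IsLeast {n | ∀ c : Fin n → Fin n → Fin k, (∀ a b, c a b = c b a) →
      RainbowTri Full c ∨ MonoP4 Full c} (k + 3) := by
  refine ⟨fun c hsym => rainbowTri_or_monoP4 (Fintype.card_fin _) hsym, fun n hn => ?_⟩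
  by_contra! hlt
  obtain ⟨m, rfl⟩ := Nat.exists_eq_add_of_le' hk
  rcases hn (minColoring n m) minColoring_comm with h | h
  exacts [not_rainbowTri_minColoring h, not_monoP4_minColoring (by omega) h]
end

section
/- Let k ≥ 1 and let H be a k-edge-coloring of K_{k+2} with no rainbow triangle and no monochromatic P_4. Then H contains a monochromatic triangle. -/
lemma lemA {n k : ℕ} (c : Fin n → Fin n → Fin k) (hsym : ∀ a b, c a b = c b a)
    (hnr : ¬ RainbowTri Full c) (hnp : ¬ MonoP4 Full c)
    {a b a' b' : Fin n} (hab : a ≠ b) (hab' : a' ≠ b')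
    (h1 : a ≠ a') (h2 : a ≠ b') (h3 : b ≠ a') (h4 : b ≠ b')
    (hc : c a b = c a' b') : False := by
  by_cases e1 : c a a' = c a b
  · -- path b - a - a' - b'
    exact hnp ⟨b, a, a', b', hab.symm, h3, h4, h1, h2, hab',
      hab.symm, h1, hab', by rw [hsym b a]; exact e1.symm, by rw [e1, hc]⟩
  by_cases e2 : c a b' = c a b
  · exact hnp ⟨b, a, b', a', hab.symm, h4, h3, h2, h1, hab'.symm,
      hab.symm, h2, hab'.symm, by rw [hsym b a]; exact e2.symm,
      by rw [e2, hc, hsym a' b']⟩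
  by_cases e3 : c b a' = c a b
  · exact hnp ⟨a, b, a', b', hab, h1, h2, h3, h4, hab',
      hab, h3, hab', e3.symm, by rw [e3, hc]⟩
  by_cases e4 : c b b' = c a b
  · exact hnp ⟨a, b, b', a', hab, h2, h1, h4, h3, hab'.symm,
      hab, h4, hab'.symm, e4.symm, by rw [e4, hc, hsym a' b']⟩
  -- all cross edges differ from i := c a b
  have t1 : c a a' = c b a' := by
    by_contra hne
    exact hnr ⟨a, b, a', hab, h1, h3, fun h => e1 h.symm, fun h => e3 h.symm, hne⟩
  have t2 : c a' a = c b' a := by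
    by_contra hne
    exact hnr ⟨a', b', a, hab', h1.symm, h2.symm,
      fun h => e1 ((hsym a a').trans (h.symm.trans hc.symm)),
      fun h => e2 ((hsym a b').trans (h.symm.trans hc.symm)), hne⟩
  -- path b - a' - a - b'
  exact hnp ⟨b, a', a, b', h3, hab.symm, h4, h1.symm, hab', h2,
    h3, h1.symm, h2,
    t1.symm.trans (hsym a a'), t2.trans (hsym b' a)⟩

lemma aux : ∀ k : ℕ, ∀ c : Fin (k+2) → Fin (k+2) → Fin k,
    (∀ a b, c a b = c b a) → ¬ RainbowTri Full c → ¬ MonoP4 Full c →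
    MonoTri Full c := by
  intro k
  induction k with
  | zero => intro c _ _ _; exact (c 0 0).elim0
  | succ k ih =>
    intro c hsym hnr hnp
    by_contra hM
    classical
    set D : Fin (k+1) → ℕ := fun i =>
      (Finset.univ.filter fun p : Fin (k+3) × Fin (k+3) =>
        p.1 ≠ p.2 ∧ c p.1 p.2 = i).card with hD
    obtain ⟨i, -, hmax⟩ := Finset.exists_max_image Finset.univ D ⟨0, Finset.mem_univ 0⟩
    -- Step 1: some edge has color i
    have hv01 : (⟨0, by omega⟩ : Fin (k+3)) ≠ ⟨1, by omega⟩ := by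
      intro h; simpa using congrArg Fin.val h
    have hpos : 0 < D i := by
      have h1 : 0 < D (c ⟨0, by omega⟩ ⟨1, by omega⟩) :=
        Finset.card_pos.2 ⟨(⟨0, by omega⟩, ⟨1, by omega⟩),
          Finset.mem_filter.2 ⟨Finset.mem_univ _, hv01, rfl⟩⟩
      exact lt_of_lt_of_le h1 (hmax _ (Finset.mem_univ _))
    obtain ⟨⟨p, q⟩, hmem⟩ := Finset.card_pos.1 hpos
    obtain ⟨-, hpq, hcpq⟩ := Finset.mem_filter.1 hmem
    -- Step 2: all i-edges go through a common vertex v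
    have hcenter : ∃ v, ∀ x y, x ≠ y → c x y = i → (x = v ∨ y = v) := by
      by_contra hcon
      push_neg at hcon
      obtain ⟨x, y, hxy, hcxy, hxp, hyp⟩ := hcon p
      obtain ⟨x', y', hxy', hcxy', hxq, hyq⟩ := hcon q
      -- from edge (x,y) avoiding p, get a with c q a = i, a ∉ {p, q}
      have ha : ∃ a, a ≠ p ∧ a ≠ q ∧ c q a = i := by
        by_cases hxq2 : x = q
        · exact ⟨y, hyp, fun h => hxy (hxq2.trans h.symm), hxq2 ▸ hcxy⟩
        by_cases hyq2 : y = q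
        · exact ⟨x, hxp, fun h => hxy (h.trans hyq2.symm), by
            rw [hsym]; exact hyq2 ▸ hcxy⟩
        · exact absurd (hcpq.trans hcxy.symm)
            (fun h => lemA c hsym hnr hnp hpq hxy (Ne.symm hxp) (Ne.symm hyp)
              (Ne.symm hxq2) (Ne.symm hyq2) h |>.elim)
      have hb : ∃ b, b ≠ p ∧ b ≠ q ∧ c p b = i := by
        by_cases hxp2 : x' = p
        · exact ⟨y', fun h => hxy' (hxp2.trans h.symm), hyq, hxp2 ▸ hcxy'⟩
        by_cases hyp2 : y' = p
        · exact ⟨x', fun h => hxy' (h.trans hyp2.symm), hxq, by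
            rw [hsym]; exact hyp2 ▸ hcxy'⟩
        · exact absurd (hcpq.trans hcxy'.symm)
            (fun h => lemA c hsym hnr hnp hpq hxy' (Ne.symm hxp2) (Ne.symm hyp2)
              (Ne.symm hxq) (Ne.symm hyq) h |>.elim)
      obtain ⟨a, hap, haq, hcqa⟩ := ha
      obtain ⟨b, hbp, hbq, hcpb⟩ := hb
      by_cases hab : a = b
      · have hcpa : c p a = i := by rw [hab]; exact hcpb
        exact hM ⟨p, q, a, hpq, Ne.symm hap, Ne.symm haq, hpq, Ne.symm hap,
          Ne.symm haq, hcpq.trans hcpa.symm, hcpa.trans hcqa.symm⟩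
      · exact lemA c hsym hnr hnp (Ne.symm haq) (Ne.symm hbp)
          hpq.symm (Ne.symm hbq) hap hab (hcqa.trans hcpb.symm)
    obtain ⟨v, hv⟩ := hcenter
    -- Step 3: v is a spanning star in color i
    have hspan : ∀ x, x ≠ v → c v x = i := by
      by_contra hcon
      push_neg at hcon
      obtain ⟨x, hxv, hji⟩ := hcon
      have hxa : ∀ a, a ≠ v → c v a = i → (c x a = c v x ∧ a ≠ x) := by
        intro a hav hcva
        have hax : a ≠ x := fun h => hji (h ▸ hcva)
        have hne : c x a ≠ i := by
          intro h
          rcases hv x a (Ne.symm hax) h with h' | h'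
          · exact hxv h'
          · exact hav h'
        refine ⟨?_, hax⟩
        by_contra hne2
        exact hnr ⟨v, x, a, Ne.symm hxv, Ne.symm hav, Ne.symm hax,
          fun h => hji (h.trans hcva), fun h => hne2 h.symm,
          fun h => hne (h.symm.trans hcva)⟩
      set Si := Finset.univ.filter (fun pr : Fin (k+1+2) × Fin (k+1+2) =>
        pr.1 ≠ pr.2 ∧ c pr.1 pr.2 = i) with hSi
      set Sj := Finset.univ.filter (fun pr : Fin (k+1+2) × Fin (k+1+2) =>
        pr.1 ≠ pr.2 ∧ c pr.1 pr.2 = c v x) with hSj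
      set F : Fin (k+1+2) × Fin (k+1+2) → Fin (k+1+2) × Fin (k+1+2) :=
        fun pr => if pr.1 = v then (x, pr.2) else (pr.1, x) with hF
      have himg : ∀ pr ∈ Si, F pr ∈ Sj := by
        intro pr hpr
        obtain ⟨-, hst, hcst⟩ := Finset.mem_filter.1 hpr
        rcases hv pr.1 pr.2 hst hcst with h1 | h1
        · have h2 : pr.2 ≠ v := fun h => hst (h1.trans h.symm)
          have h3 := hxa pr.2 h2 (by rw [← h1]; exact hcst)
          rw [hF]; simp only [if_pos h1]
          exact Finset.mem_filter.2 ⟨Finset.mem_univ _, Ne.symm h3.2, h3.1⟩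
        · have h2 : pr.1 ≠ v := fun h => hst (h.trans h1.symm)
          have h3 := hxa pr.1 h2 (by rw [hsym v pr.1, ← h1]; exact hcst)
          rw [hF]; simp only [if_neg h2]
          exact Finset.mem_filter.2 ⟨Finset.mem_univ _, h3.2,
            (hsym pr.1 x).trans h3.1⟩
      have hinj : Set.InjOn F (Si : Set (Fin (k+1+2) × Fin (k+1+2))) := by
        intro pr hpr pr' hpr' heq
        obtain ⟨-, hst, hcst⟩ := Finset.mem_filter.1 (Finset.mem_coe.1 hpr)
        obtain ⟨-, hst', hcst'⟩ := Finset.mem_filter.1 (Finset.mem_coe.1 hpr')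
        rw [hF] at heq
        by_cases h1 : pr.1 = v <;> by_cases h1' : pr'.1 = v
        · simp only [if_pos h1, if_pos h1'] at heq
          rw [Prod.mk.injEq] at heq
          exact Prod.ext (h1.trans h1'.symm) heq.2
        · simp only [if_pos h1, if_neg h1'] at heq
          rw [Prod.mk.injEq] at heq
          exact absurd (by rw [← h1, ← heq.2]; exact hcst) hji
        · simp only [if_neg h1, if_pos h1'] at heq
          rw [Prod.mk.injEq] at heq
          exact absurd (by rw [← h1', heq.2]; exact hcst') hji
        · simp only [if_neg h1, if_neg h1'] at heq
          rw [Prod.mk.injEq] at heq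
          have h2 : pr.2 = v := (hv pr.1 pr.2 hst hcst).resolve_left h1
          have h2' : pr'.2 = v := (hv pr'.1 pr'.2 hst' hcst').resolve_left h1'
          exact Prod.ext heq.1 (h2.trans h2'.symm)
      have hsub : Finset.image F Si ⊆ Sj := Finset.image_subset_iff.2 himg
      have hvx : (v, x) ∈ Sj :=
        Finset.mem_filter.2 ⟨Finset.mem_univ _, Ne.symm hxv, rfl⟩
      have hnotin : (v, x) ∉ Finset.image F Si := by
        intro h
        obtain ⟨pr, hpr, heq⟩ := Finset.mem_image.1 h
        rw [hF] at heq
        by_cases h1 : pr.1 = v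
        · simp only [if_pos h1] at heq
          rw [Prod.mk.injEq] at heq
          exact hxv heq.1
        · simp only [if_neg h1] at heq
          rw [Prod.mk.injEq] at heq
          exact h1 heq.1
      have hlt : D i < D (c v x) := by
        have : Si.card = (Finset.image F Si).card := (Finset.card_image_of_injOn hinj).symm
        calc D i = Si.card := rfl
          _ = (Finset.image F Si).card := this
          _ < Sj.card := Finset.card_lt_card
              ((Finset.ssubset_iff_of_subset hsub).2 ⟨(v, x), hvx, hnotin⟩)
          _ = D (c v x) := rfl
      exact absurd (hmax (c v x) (Finset.mem_univ _)) (not_le.2 hlt)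
    -- Step 4: restrict to the k+2 non-v vertices and the k non-i colors
    have hcard2 : 1 < (Finset.univ.erase v).card := by
      rw [Finset.card_erase_of_mem (Finset.mem_univ v), Finset.card_univ, Fintype.card_fin]
      omega
    obtain ⟨a0, ha0, b0, hb0, hab0⟩ := Finset.one_lt_card.1 hcard2
    have ha0v : a0 ≠ v := (Finset.mem_erase.1 ha0).1
    have hb0v : b0 ≠ v := (Finset.mem_erase.1 hb0).1
    have hj0 : c a0 b0 ≠ i := by
      intro h
      rcases hv a0 b0 hab0 h with h' | h'
      · exact ha0v h'
      · exact hb0v h'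
    set e := finSuccEquiv' i with he
    obtain ⟨w0, -⟩ := Option.ne_none_iff_exists'.1
      (show e (c a0 b0) ≠ none from
        fun h => hj0 (e.injective (h.trans (finSuccEquiv'_at i).symm)))
    set σ : Fin (k+2) → Fin (k+1+2) := v.succAbove with hσ
    have hσv : ∀ x, σ x ≠ v := fun x => Fin.succAbove_ne v x
    have hσinj : ∀ {x y : Fin (k+2)}, σ x = σ y → x = y :=
      fun h => Fin.succAbove_right_injective h
    set c' : Fin (k+2) → Fin (k+2) → Fin k :=
      fun x y => (e (c (σ x) (σ y))).getD w0 with hc'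
    have key : ∀ x y : Fin (k+2), x ≠ y → e (c (σ x) (σ y)) = some (c' x y) := by
      intro x y hxy
      have hne : c (σ x) (σ y) ≠ i := by
        intro h
        rcases hv _ _ (fun h' => hxy (hσinj h')) h with h' | h'
        · exact hσv x h'
        · exact hσv y h'
      obtain ⟨u, hu⟩ := Option.ne_none_iff_exists'.1
        (show e (c (σ x) (σ y)) ≠ none from
          fun h => hne (e.injective (h.trans (finSuccEquiv'_at i).symm)))
      rw [hc']
      simp only [hu, Option.getD_some]
    have keq : ∀ x y x' y' : Fin (k+2), x ≠ y → x' ≠ y' → c' x y = c' x' y' →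
        c (σ x) (σ y) = c (σ x') (σ y') := by
      intro x y x' y' h1 h2 h3
      exact e.injective ((key x y h1).trans (by rw [h3]; exact (key x' y' h2).symm))
    have keq' : ∀ x y x' y' : Fin (k+2), x ≠ y → x' ≠ y' →
        c (σ x) (σ y) = c (σ x') (σ y') → c' x y = c' x' y' := by
      intro x y x' y' h1 h2 h3
      exact Option.some.inj ((key x y h1).symm.trans ((congrArg e h3).trans (key x' y' h2)))
    have hsym' : ∀ a b, c' a b = c' b a := by
      intro a b; rw [hc']; simp only [hsym (σ a) (σ b)]
    have hnr' : ¬ RainbowTri Full c' := by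
      rintro ⟨a, b, d, hab, had, hbd, h1, h2, h3⟩
      exact hnr ⟨σ a, σ b, σ d, fun h => hab (hσinj h), fun h => had (hσinj h),
        fun h => hbd (hσinj h),
        fun h => h1 (keq' a b a d hab had h), fun h => h2 (keq' a b b d hab hbd h),
        fun h => h3 (keq' a d b d had hbd h)⟩
    have hnp' : ¬ MonoP4 Full c' := by
      rintro ⟨a, b, d, e2, h1, h2, h3, h4, h5, h6, -, -, -, e1', e2'⟩
      exact hnp ⟨σ a, σ b, σ d, σ e2,
        fun h => h1 (hσinj h), fun h => h2 (hσinj h), fun h => h3 (hσinj h),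
        fun h => h4 (hσinj h), fun h => h5 (hσinj h), fun h => h6 (hσinj h),
        fun h => h1 (hσinj h), fun h => h4 (hσinj h), fun h => h6 (hσinj h),
        keq a b b d h1 h4 e1', keq b d d e2 h4 h6 e2'⟩
    obtain ⟨a, b, d, hab, had, hbd, -, -, -, m1, m2⟩ := ih c' hsym' hnr' hnp'
    exact hM ⟨σ a, σ b, σ d, fun h => hab (hσinj h), fun h => had (hσinj h),
      fun h => hbd (hσinj h), fun h => hab (hσinj h), fun h => had (hσinj h),
      fun h => hbd (hσinj h), keq a b a d hab had m1, keq a d b d had hbd m2⟩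

theorem stmt9 (k : ℕ) (hk : 1 ≤ k)
    (c : Fin (k + 2) → Fin (k + 2) → Fin k) (hsym : ∀ a b, c a b = c b a)
    (hnr : ¬ RainbowTri Full c) (hnp : ¬ MonoP4 Full c) :
    MonoTri Full c :=
  aux k c hsym hnr hnp
end

section
/- Let k ≥ 1 and n = k + 3 = gr_k(K_3 : P_4). Every k-edge-coloring of K_{n-1} containing no rainbow triangle and no monochromatic P_4 has the following structure: there is a monochromatic triangle v_1v_2v_3 in some color (say color 1); for each remaining vertex v_i (4 ≤ i ≤ n-1) all three edges from v_i to {v_1,v_2,v_3} have a common color distinct from 1, these common colors are pairwise distinct across different i (so after relabeling, the edges from v_i to the triangle have color i-2); and every edge v_iv_j with 4 ≤ i < j ≤ n-1 has color i-2 or j-2. -/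
lemma tri_aux {n k : ℕ} (c : Fin n → Fin n → Fin k)
    (hsym : ∀ a b, c a b = c b a)
    (hnr : ∀ a b d : Fin n, a ≠ b → a ≠ d → b ≠ d →
      c a b = c a d ∨ c a b = c b d ∨ c a d = c b d)
    (hnp : ∀ a b d e : Fin n, a ≠ b → a ≠ d → a ≠ e → b ≠ d → b ≠ e → d ≠ e →
      ¬(c a b = c b d ∧ c b d = c d e)) :
    ∀ m (C : Finset (Fin k)) (S : Finset (Fin n)), C.card = m →
      (∀ a ∈ S, ∀ b ∈ S, a ≠ b → c a b ∈ C) → m + 2 ≤ S.card →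
      ∃ p ∈ S, ∃ q ∈ S, ∃ r ∈ S, p ≠ q ∧ p ≠ r ∧ q ≠ r ∧
        c p q = c p r ∧ c p r = c q r := by
  intro m
  induction m with
  | zero =>
      intro C S hCcard hC hcard
      have h1S : 1 < S.card := by omega
      obtain ⟨a, ha, b, hb, hab⟩ := Finset.one_lt_card.mp h1S
      have := hC a ha b hb hab
      rw [Finset.card_eq_zero.mp hCcard] at this
      exact absurd this (Finset.notMem_empty _)
  | succ m ih =>
      intro C S hCcard hC hcard
      by_contra hno
      have hnotri : ∀ p ∈ S, ∀ q ∈ S, ∀ r ∈ S, p ≠ q → p ≠ r → q ≠ r →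
          c p q = c p r → c p r = c q r → False := by
        intro p hp q hq r hr h1 h2 h3 h4 h5
        exact hno ⟨p, hp, q, hq, r, hr, h1, h2, h3, h4, h5⟩
      have h0S : 0 < S.card := by omega
      obtain ⟨v, hv⟩ := Finset.card_pos.mp h0S
      have hmap : ∀ u ∈ S.erase v, c v u ∈ C := fun u hu =>
        hC v hv u (Finset.mem_of_mem_erase hu) (Ne.symm (Finset.ne_of_mem_erase hu))
      have hlt : C.card < (S.erase v).card := by
        rw [Finset.card_erase_of_mem hv]; omega
      obtain ⟨a, ha, b, hb, hab, hx⟩ :=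
        Finset.exists_ne_map_eq_of_card_lt_of_maps_to hlt hmap
      have haS : a ∈ S := Finset.mem_of_mem_erase ha
      have hbS : b ∈ S := Finset.mem_of_mem_erase hb
      have hav : a ≠ v := Finset.ne_of_mem_erase ha
      have hbv : b ≠ v := Finset.ne_of_mem_erase hb
      set x := c v a with hxdef
      have hvb : c v b = x := hx.symm
      -- Claim A
      have claimA : ∀ p ∈ S, ∀ r ∈ S, ∀ q ∈ S, p ≠ v → r ≠ v → q ≠ v → p ≠ r → q ≠ p →
          c v p = x → c v r = x → c q p ≠ x := by
        intro p hp r hr q hq hpv hrv hqv hpr hqp hvp hvr hqpx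
        by_cases hqr : q = r
        · subst hqr
          -- triangle v p q monochromatic
          exact hnotri v hv p hp q hq (Ne.symm hpv) (Ne.symm hqv) (Ne.symm hqp)
            (hvp.trans hvr.symm)
            (by rw [hvr, ← hqpx, hsym q p])
        · -- P4 : q - p - v - r
          exact hnp q p v r hqp hqv hqr hpv hpr (Ne.symm hrv)
            ⟨by rw [hqpx, hsym p v, hvp], by rw [hsym p v, hvp, hvr]⟩
      have hA : ∀ p' ∈ S, p' ≠ v → c v p' = x → ∀ q' ∈ S, q' ≠ v → q' ≠ p' →
          c q' p' ≠ x := by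
        intro p' hp' hp'v hvp' q' hq' hq'v hq'p'
        by_cases hpa : p' = a
        · subst hpa
          exact claimA p' hp' b hbS q' hq' hp'v hbv hq'v hab hq'p' hvp' hvb
        · exact claimA p' hp' a haS q' hq' hp'v hav hq'v hpa hq'p' hvp' rfl
      -- Claim B : no x-colored edge within S.erase v
      have claimB : ∀ p ∈ S, ∀ q ∈ S, p ≠ v → q ≠ v → p ≠ q → c p q ≠ x := by
        intro p hp q hq hpv hqv hpq hcpq
        by_cases hvpx : c v p = x
        · exact hA p hp hpv hvpx q hq hqv (Ne.symm hpq) (by rw [hsym q p]; exact hcpq) 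
        · by_cases hvqx : c v q = x
          · exact hA q hq hqv hvqx p hp hpv hpq hcpq
          · -- both c v p, c v q ≠ x
            have hz : c v p = c v q := by
              rcases hnr v p q (Ne.symm hpv) (Ne.symm hqv) hpq with h | h | h
              · exact h
              · exact absurd (h.trans hcpq) hvpx
              · exact absurd (h.trans hcpq) hvqx
            have hpa : p ≠ a := fun h => hvpx (by rw [h])
            have hqa : q ≠ a := fun h => hvqx (by rw [h])
            have hpax : c p a ≠ x := hA a haS hav rfl p hp hpv hpa
            have hqax : c q a ≠ x := hA a haS hav rfl q hq hqv hqa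
            have hvpa : c v p = c p a := by
              rcases hnr v p a (Ne.symm hpv) (Ne.symm hav) hpa with h | h | h
              · exact absurd h hvpx
              · exact h
              · exact absurd h.symm hpax
            have hvqa : c v q = c q a := by
              rcases hnr v q a (Ne.symm hqv) (Ne.symm hav) hqa with h | h | h
              · exact absurd h hvqx
              · exact h
              · exact absurd h.symm hqax
            -- P4 : v - p - a - q
            exact hnp v p a q (Ne.symm hpv) (Ne.symm hav) (Ne.symm hqv) hpa hpq
              (Ne.symm hqa)
              ⟨hvpa, by rw [hsym a q, ← hvqa, ← hz, hvpa]⟩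
      have hxC : x ∈ C := hC v hv a haS (Ne.symm hav)
      have hC' : ∀ p ∈ S.erase v, ∀ q ∈ S.erase v, p ≠ q → c p q ∈ C.erase x := by
        intro p hp q hq hpq
        refine Finset.mem_erase.mpr ⟨?_, hC p (Finset.mem_of_mem_erase hp) q
          (Finset.mem_of_mem_erase hq) hpq⟩
        exact claimB p (Finset.mem_of_mem_erase hp) q (Finset.mem_of_mem_erase hq)
          (Finset.ne_of_mem_erase hp) (Finset.ne_of_mem_erase hq) hpq
      obtain ⟨p, hp, q, hq, r, hr, h1, h2, h3, h4, h5⟩ :=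
        ih (C.erase x) (S.erase v)
          (by rw [Finset.card_erase_of_mem hxC, hCcard]; omega)
          hC'
          (by rw [Finset.card_erase_of_mem hv]; omega)
      exact hnotri p (Finset.mem_of_mem_erase hp) q (Finset.mem_of_mem_erase hq)
        r (Finset.mem_of_mem_erase hr) h1 h2 h3 h4 h5

theorem stmt10 (k : ℕ) (hk : 1 ≤ k)
    (c : Fin (k + 2) → Fin (k + 2) → Fin k) (hsym : ∀ a b, c a b = c b a)
    (hnr : ¬ RainbowTri Full c) (hnp : ¬ MonoP4 Full c) :
    ∃ (t : Finset (Fin (k + 2))) (i : Fin k) (g : Fin (k + 2) → Fin k),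
      t.card = 3 ∧
      (∀ a ∈ t, ∀ b ∈ t, a ≠ b → c a b = i) ∧
      (∀ w, w ∉ t → g w ≠ i ∧ ∀ u ∈ t, c w u = g w) ∧
      (∀ w w', w ∉ t → w' ∉ t → w ≠ w' → g w ≠ g w') ∧
      (∀ w w', w ∉ t → w' ∉ t → w ≠ w' → c w w' = g w ∨ c w w' = g w') := by
  have hnr' : ∀ a b d : Fin (k+2), a ≠ b → a ≠ d → b ≠ d →
      c a b = c a d ∨ c a b = c b d ∨ c a d = c b d := by
    intro a b d h1 h2 h3
    by_contra h
    push_neg at h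
    exact hnr ⟨a, b, d, h1, h2, h3, h.1, h.2.1, h.2.2⟩
  have hnp' : ∀ a b d e : Fin (k+2), a ≠ b → a ≠ d → a ≠ e → b ≠ d → b ≠ e → d ≠ e →
      ¬(c a b = c b d ∧ c b d = c d e) := by
    intro a b d e h1 h2 h3 h4 h5 h6 h
    exact hnp ⟨a, b, d, e, h1, h2, h3, h4, h5, h6, h1, h4, h6, h.1, h.2⟩
  obtain ⟨p, -, q, -, r, -, hpq, hpr, hqr, h4, h5⟩ :=
    tri_aux c hsym hnr' hnp' k Finset.univ Finset.univ
      (by simp) (fun a _ b _ _ => Finset.mem_univ _) (by simp)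
  -- key facts about outside vertices
  have key : ∀ w : Fin (k+2), w ≠ p → w ≠ q → w ≠ r →
      c w p ≠ c p q ∧ c w q = c w p ∧ c w r = c w p := by
    intro w hwp hwq hwr
    have hgwi : c w p ≠ c p q := by
      intro h
      exact hnp' w p q r hwp hwq hwr hpq hpr hqr ⟨h, h4.trans h5⟩
    have hgwq : c w q ≠ c p q := by
      intro h
      exact hnp' w q p r hwq hwp hwr (Ne.symm hpq) hqr hpr
        ⟨h.trans (hsym p q), (hsym q p).trans h4⟩
    have hgwr : c w r ≠ c p r := by
      intro h
      exact hnp' w r p q hwr hwp hwq (Ne.symm hpr) (Ne.symm hqr) hpq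
        ⟨h.trans (hsym p r), (hsym r p).trans h4.symm⟩
    refine ⟨hgwi, ?_, ?_⟩
    · rcases hnr' w p q hwp hwq hpq with h | h | h
      · exact h.symm
      · exact absurd h hgwi
      · exact absurd h hgwq
    · rcases hnr' w p r hwp hwr hpr with h | h | h
      · exact h.symm
      · exact absurd (h.trans h4.symm) hgwi
      · exact absurd h hgwr
  have memt : ∀ a : Fin (k+2), a ∈ ({p, q, r} : Finset (Fin (k+2))) ↔
      a = p ∨ a = q ∨ a = r := by
    intro a; simp [Finset.mem_insert, Finset.mem_singleton]
  have hD : ∀ w w' : Fin (k+2), w ∉ ({p, q, r} : Finset (Fin (k+2))) →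
      w' ∉ ({p, q, r} : Finset (Fin (k+2))) → w ≠ w' → c w p ≠ c w' p := by
    intro w w' hw hw' hne heq
    rw [memt, not_or, not_or] at hw hw'
    exact hnp' w p w' q hw.1 hne hw.2.1 (Ne.symm hw'.1) hpq hw'.2.1
      ⟨heq.trans (hsym w' p), (hsym p w').trans (key w' hw'.1 hw'.2.1 hw'.2.2).2.1.symm⟩
  refine ⟨{p, q, r}, c p q, fun w => c w p, ?_, ?_, ?_, hD, ?_⟩
  · exact Finset.card_eq_three.mpr ⟨p, q, r, hpq, hpr, hqr, rfl⟩
  · intro a hat b hbt hab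
    rw [memt] at hat hbt
    rcases hat with rfl | rfl | rfl <;> rcases hbt with rfl | rfl | rfl <;>
      first
        | exact absurd rfl hab
        | rfl
        | exact h4.symm
        | exact h5.symm.trans h4.symm
        | exact (hsym _ _).trans rfl
        | exact (hsym _ _).trans h4.symm
        | exact (hsym _ _).trans (h5.symm.trans h4.symm)
  · intro w hw
    rw [memt, not_or, not_or] at hw
    obtain ⟨hwp, hwq, hwr⟩ := hw
    obtain ⟨k1, k2, k3⟩ := key w hwp hwq hwr
    refine ⟨k1, ?_⟩
    intro u hu
    rw [memt] at hu
    rcases hu with rfl | rfl | rfl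
    · rfl
    · exact k2
    · exact k3
  · intro w w' hw hw' hne
    have hwp : w ≠ p := by rw [memt, not_or, not_or] at hw; exact hw.1
    have hw'p : w' ≠ p := by rw [memt, not_or, not_or] at hw'; exact hw'.1
    rcases hnr' w w' p hne hwp hw'p with h | h | h
    · exact Or.inl h
    · exact Or.inr h
    · exact absurd h (hD w w' hw hw' hne)
end

section
/- For every positive integer k, the star-critical Gallai-Ramsey number gr_k^*(K_3 : P_4) equals k. That is: (1) every k-edge-coloring of the graph obtained from K_{k+2} by adding a new vertex joined to k vertices contains a rainbow triangle or a monochromatic P_4 whenever the K_{k+2} itself contains neither; and (2) there exists a k-edge-coloring of K_{k+2} plus a new vertex joined to k-1 vertices with no rainbow triangle and no monochromatic P_4. -/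
/-!
Upper bound, by induction on the number of colours. In a colouring of `K_{n+2}` with `n ≥ 2`
colours and no rainbow triangle or monochromatic `P₄`, a vertex `v` of largest monochromatic
degree, say in colour `i`, is the centre of a spanning star of colour `i`, and no other edge has
colour `i`. A pendant edge of colour `i` from the apex to `A \ {v}` closes a monochromatic `P₄`
through `v`; otherwise `v` and colour `i` can be deleted. With one colour left, the triangle and any
pendant edge form a monochromatic `P₄`.

Lower bound: let the apex be a twin of vertex `0` joined only to `3, …, k+1`, and give each edge
the colour (larger end) `- 2`. Two edges of every triangle share its top vertex, colour `j > 0` is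
a star, and colour `0` is the triangle `{0, 1, 2}`.
-/

open Finset

variable {V : Type} {k : ℕ}

def cliqueAdj (W : Finset V) (a b : V) : Prop := a ∈ W ∧ b ∈ W ∧ a ≠ b

def coneAdj (W A : Finset V) : Option V → Option V → Prop
  | some a, some b => cliqueAdj W a b
  | some a, none => a ∈ A
  | none, some b => b ∈ A
  | none, none => False

theorem RainbowTri.mono {Adj Adj' : V → V → Prop} {c : V → V → Fin k}
    (h : ∀ a b, Adj a b → Adj' a b) : RainbowTri Adj c → RainbowTri Adj' c := by
  rintro ⟨a, b, d, hab, had, hbd, hc⟩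
  exact ⟨a, b, d, h _ _ hab, h _ _ had, h _ _ hbd, hc⟩

theorem MonoP4.mono {Adj Adj' : V → V → Prop} {c : V → V → Fin k}
    (h : ∀ a b, Adj a b → Adj' a b) : MonoP4 Adj c → MonoP4 Adj' c := by
  rintro ⟨a, b, d, e, h₁, h₂, h₃, h₄, h₅, h₆, hab, hbd, hde, hc⟩
  exact ⟨a, b, d, e, h₁, h₂, h₃, h₄, h₅, h₆, h _ _ hab, h _ _ hbd, h _ _ hde, hc⟩

theorem cliqueAdj_mono {W W' : Finset V} (hW : W' ⊆ W) (a b : V) :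
    cliqueAdj W' a b → cliqueAdj W a b
  | ⟨ha, hb, hab⟩ => ⟨hW ha, hW hb, hab⟩

theorem coneAdj_mono {W W' A A' : Finset V} (hW : W' ⊆ W) (hA : A' ⊆ A) :
    ∀ x y, coneAdj W' A' x y → coneAdj W A x y
  | some a, some b, h => cliqueAdj_mono hW a b h
  | some _, none, h => hA h
  | none, some _, h => hA h

section Star

variable [DecidableEq V] (c : V → V → Fin k) (W : Finset V)

def colorNeighbors (v : V) (i : Fin k) : Finset V := {u ∈ W | u ≠ v ∧ c v u = i}

variable {c W}

theorem mem_colorNeighbors {v u : V} {i : Fin k} :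
    u ∈ colorNeighbors c W v i ↔ u ∈ W ∧ u ≠ v ∧ c v u = i := mem_filter

theorem exists_one_lt_card_colorNeighbors {C : Finset (Fin k)}
    (hcol : ∀ a ∈ W, ∀ b ∈ W, a ≠ b → c a b ∈ C) (hW : C.card + 1 < W.card) :
    ∃ v ∈ W, ∃ i, 1 < (colorNeighbors c W v i).card := by
  obtain ⟨v, hv⟩ := card_pos.mp (by omega : 0 < W.card)
  have hlt : C.card < (W.erase v).card := by rw [card_erase_of_mem hv]; omega
  obtain ⟨x, hx, y, hy, hxy, hcxy⟩ := exists_ne_map_eq_of_card_lt_of_maps_to hlt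
    (f := c v) fun u hu => hcol v hv u (mem_of_mem_erase hu) (ne_of_mem_erase hu).symm
  refine ⟨v, hv, c v x, one_lt_card.mpr ⟨x, ?_, y, ?_, hxy⟩⟩
  · exact mem_colorNeighbors.mpr ⟨mem_of_mem_erase hx, ne_of_mem_erase hx, rfl⟩
  · exact mem_colorNeighbors.mpr ⟨mem_of_mem_erase hy, ne_of_mem_erase hy, hcxy.symm⟩

/-- A largest monochromatic star is spanning: a vertex `u` outside it sees the star's leaves in
the colour of `uv` (no rainbow triangle, no `P₄` through `u`), so `u` would carry a larger one. -/
theorem colorNeighbors_spanning_of_isMax (hc : ∀ a b, c a b = c b a)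
    (hR : ¬ RainbowTri (cliqueAdj W) c) (hP : ¬ MonoP4 (cliqueAdj W) c) {v : V} {i : Fin k}
    (hv : v ∈ W)
    (hmax : ∀ u ∈ W, ∀ j, (colorNeighbors c W u j).card ≤ (colorNeighbors c W v i).card)
    (hS : 1 < (colorNeighbors c W v i).card) :
    ∀ u ∈ W, u ≠ v → c v u = i := by
  set S := colorNeighbors c W v i
  by_contra! ⟨u, hu, huv, hui⟩
  have hS_ne_i : ∀ a ∈ S, c u a ≠ i := by
    intro a ha hua
    obtain ⟨b, hb, hba⟩ := exists_mem_ne hS a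
    obtain ⟨ha, hav, hva⟩ := mem_colorNeighbors.mp ha
    obtain ⟨hb, hbv, hvb⟩ := mem_colorNeighbors.mp hb
    refine hP ⟨u, a, v, b, ?_, huv, ?_, hav, hba.symm, hbv.symm, ⟨hu, ha, ?_⟩, ⟨ha, hv, hav⟩,
      ⟨hv, hb, hbv.symm⟩, by rw [hua, hc, hva], by rw [hc, hva, hvb]⟩
    all_goals rintro rfl; contradiction
  have hS_col : ∀ a ∈ S, c u a = c u v := by
    intro a ha
    obtain ⟨ha', hav, hva⟩ := mem_colorNeighbors.mp ha
    by_contra hne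
    refine hR ⟨u, v, a, ⟨hu, hv, huv⟩, ⟨hu, ha', ?_⟩, ⟨hv, ha', hav.symm⟩, Ne.symm hne, ?_, ?_⟩
    · rintro rfl; exact hui hva
    · rw [hva, hc]; exact hui
    · rw [hva]; exact hS_ne_i a ha
  have hsub : insert v S ⊆ colorNeighbors c W u (c u v) := by
    intro a ha
    rcases mem_insert.mp ha with rfl | ha
    · exact mem_colorNeighbors.mpr ⟨hv, huv.symm, rfl⟩
    · refine mem_colorNeighbors.mpr ⟨(mem_colorNeighbors.mp ha).1, ?_, hS_col a ha⟩
      rintro rfl; exact hui (mem_colorNeighbors.mp ha).2.2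
  have hvS : v ∉ S := fun h => (mem_colorNeighbors.mp h).2.1 rfl
  have := (card_le_card hsub).trans (hmax u hu (c u v))
  rw [card_insert_of_notMem hvS] at this
  omega

theorem ne_of_spanning_star (hc : ∀ a b, c a b = c b a) (hP : ¬ MonoP4 (cliqueAdj W) c)
    (hW : 3 < W.card) {v : V} {i : Fin k} (hv : v ∈ W) (hstar : ∀ u ∈ W, u ≠ v → c v u = i) :
    ∀ a ∈ W, ∀ b ∈ W, a ≠ v → b ≠ v → a ≠ b → c a b ≠ i := by
  intro a ha b hb hav hbv hab hci
  have hcard : ({v, a, b} : Finset V).card < W.card := card_le_three.trans_lt hW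
  obtain ⟨x, hx, hx'⟩ := exists_mem_notMem_of_card_lt_card hcard
  simp only [mem_insert, mem_singleton, not_or] at hx'
  obtain ⟨hxv, hxa, hxb⟩ := hx'
  refine hP ⟨x, v, a, b, hxv, hxa, hxb, hav.symm, hbv.symm, hab, ⟨hx, hv, hxv⟩,
    ⟨hv, ha, hav.symm⟩, ⟨ha, hb, hab⟩, by rw [hc, hstar x hx hxv, hstar a ha hav],
    by rw [hstar a ha hav, hci]⟩

end Star

theorem exists_private_star [DecidableEq V] {c : V → V → Fin k} {W : Finset V}
    {C : Finset (Fin k)} (hc : ∀ a b, c a b = c b a)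
    (hcol : ∀ a ∈ W, ∀ b ∈ W, a ≠ b → c a b ∈ C) (hW : W.card = C.card + 2) (hC : 2 ≤ C.card)
    (hR : ¬ RainbowTri (cliqueAdj W) c) (hP : ¬ MonoP4 (cliqueAdj W) c) :
    ∃ v ∈ W, ∃ i, (∀ u ∈ W, u ≠ v → c v u = i) ∧
      ∀ a ∈ W, ∀ b ∈ W, a ≠ v → b ≠ v → a ≠ b → c a b ≠ i := by
  obtain ⟨v₀, hv₀, i₀, h₀⟩ := exists_one_lt_card_colorNeighbors hcol (by omega)
  obtain ⟨⟨v, i⟩, hvi, hmax⟩ := exists_max_image (W ×ˢ univ)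
    (fun p => (colorNeighbors c W p.1 p.2).card) ⟨(v₀, i₀), by simpa using hv₀⟩
  have hv : v ∈ W := (mem_product.mp hvi).1
  have hstar := colorNeighbors_spanning_of_isMax hc hR hP hv
    (fun u hu j => hmax (u, j) (by simpa using hu))
    (h₀.trans_le (hmax (v₀, i₀) (by simpa using hv₀)))
  exact ⟨v, hv, i, hstar, ne_of_spanning_star hc hP (by omega) hv hstar⟩

theorem monoP4_cone_of_card_eq_three [DecidableEq V] {g : Option V → Option V → Fin k}
    (hg : ∀ x y, g x y = g y x) {W A : Finset V} {i : Fin k} (hW : W.card = 3) {a : V}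
    (haA : a ∈ A) (ha : a ∈ W)
    (hcol : ∀ a ∈ W, ∀ b ∈ W, a ≠ b → g (some a) (some b) = i) (hpend : g (some a) none = i) :
    MonoP4 (coneAdj W A) g := by
  obtain ⟨b, d, hbd, hWa⟩ := card_eq_two.mp
    (by rw [card_erase_of_mem ha]; omega : (W.erase a).card = 2)
  obtain ⟨hba, hb⟩ := mem_erase.mp (by simp [hWa] : b ∈ W.erase a)
  obtain ⟨hda, hd⟩ := mem_erase.mp (by simp [hWa] : d ∈ W.erase a)
  refine ⟨none, some a, some b, some d, by simp, by simp, by simp, by simpa using hba.symm,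
    by simpa using hda.symm, by simpa using hbd, haA, ⟨ha, hb, hba.symm⟩, ⟨hb, hd, hbd⟩,
    ?_, ?_⟩
  · rw [hg, hpend, hcol a ha b hb hba.symm]
  · rw [hcol a ha b hb hba.symm, hcol b hb d hd hbd]

theorem monoP4_cone_of_pendant_eq_star [DecidableEq V] {g : Option V → Option V → Fin k}
    (hg : ∀ x y, g x y = g y x) {W A : Finset V} {v u : V} {i : Fin k} (hW : 2 < W.card)
    (hv : v ∈ W) (hstar : ∀ u ∈ W, u ≠ v → g (some v) (some u) = i) (hu : u ∈ W) (huA : u ∈ A)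
    (huv : u ≠ v) (hui : g (some u) none = i) :
    MonoP4 (coneAdj W A) g := by
  have hcard : ({v, u} : Finset V).card < W.card := card_le_two.trans_lt hW
  obtain ⟨x, hx, hx'⟩ := exists_mem_notMem_of_card_lt_card hcard
  simp only [mem_insert, mem_singleton, not_or] at hx'
  obtain ⟨hxv, hxu⟩ := hx'
  refine ⟨some x, some v, some u, none, by simpa using hxv, by simpa using hxu, by simp,
    by simpa using huv.symm, by simp, by simp, ⟨hx, hv, hxv⟩, ⟨hv, hu, huv.symm⟩, huA, ?_, ?_⟩
  · rw [hg, hstar x hx hxv, hstar u hu huv]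
  · rw [hstar u hu huv, hui]

theorem cone_rainbowTri_or_monoP4 [DecidableEq V] {g : Option V → Option V → Fin k}
    (hg : ∀ x y, g x y = g y x) (n : ℕ) :
    ∀ (C : Finset (Fin k)) (W A : Finset V), C.card = n + 1 → W.card = C.card + 2 →
      A ⊆ W → C.card ≤ A.card →
      (∀ a ∈ W, ∀ b ∈ W, a ≠ b → g (some a) (some b) ∈ C) → (∀ a ∈ A, g (some a) none ∈ C) →
      ¬ RainbowTri (cliqueAdj W) (fun a b => g (some a) (some b)) →
      ¬ MonoP4 (cliqueAdj W) (fun a b => g (some a) (some b)) →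
      RainbowTri (coneAdj W A) g ∨ MonoP4 (coneAdj W A) g := by
  induction n with
  | zero =>
    intro C W A hC hW hAW hA hcol hpend _ _
    obtain ⟨i, rfl⟩ := card_eq_one.mp hC
    obtain ⟨a, ha⟩ := card_pos.mp (by omega : 0 < A.card)
    exact Or.inr (monoP4_cone_of_card_eq_three hg (by omega) ha (hAW ha)
      (fun a ha b hb hab => mem_singleton.mp (hcol a ha b hb hab))
      (mem_singleton.mp (hpend a ha)))
  | succ n ih =>
    intro C W A hC hW hAW hA hcol hpend hR hP
    obtain ⟨v, hv, i, hstar, hpriv⟩ :=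
      exists_private_star (fun a b => hg _ _) hcol hW (by omega) hR hP
    by_cases hpend_i : ∃ u ∈ A, u ≠ v ∧ g (some u) none = i
    · obtain ⟨u, huA, huv, hui⟩ := hpend_i
      exact Or.inr (monoP4_cone_of_pendant_eq_star hg (by omega) hv hstar (hAW huA) huA huv hui)
    push Not at hpend_i
    have hiC : i ∈ C := by
      obtain ⟨u, hu, huv⟩ := exists_mem_ne (by omega : 1 < W.card) v
      exact hstar u hu huv ▸ hcol v hv u hu huv.symm
    have hW' : W.erase v ⊆ W := erase_subset v W
    refine (ih (C.erase i) (W.erase v) (A.erase v) ?_ ?_ (erase_subset_erase v hAW) ?_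
      ?_ ?_ (mt (RainbowTri.mono (cliqueAdj_mono hW')) hR)
      (mt (MonoP4.mono (cliqueAdj_mono hW')) hP)).imp
      (RainbowTri.mono (coneAdj_mono hW' (erase_subset v A)))
      (MonoP4.mono (coneAdj_mono hW' (erase_subset v A)))
    · rw [card_erase_of_mem hiC]; omega
    · rw [card_erase_of_mem hiC, card_erase_of_mem hv]; omega
    · rw [card_erase_of_mem hiC]
      exact (Nat.sub_le_sub_right hA 1).trans pred_card_le_card_erase
    · intro a ha b hb hab
      obtain ⟨hav, ha⟩ := mem_erase.mp ha
      obtain ⟨hbv, hb⟩ := mem_erase.mp hb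
      exact mem_erase.mpr ⟨hpriv a ha b hb hav hbv hab, hcol a ha b hb hab⟩
    · intro a ha
      obtain ⟨hav, ha⟩ := mem_erase.mp ha
      exact mem_erase.mpr ⟨hpend_i a ha hav, hpend a ha⟩

theorem not_rainbowTri_of_max_eq {Adj : V → V → Prop} {c : V → V → Fin k} (r : V → ℕ)
    (hc : ∀ a b a' b', max (r a) (r b) = max (r a') (r b') → c a b = c a' b') :
    ¬ RainbowTri Adj c := by
  rintro ⟨a, b, d, -, -, -, h₁, h₂, h₃⟩
  have : max (r a) (r b) = max (r a) (r d) ∨ max (r a) (r b) = max (r b) (r d) ∨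
      max (r a) (r d) = max (r b) (r d) := by omega
  rcases this with h | h | h
  · exact h₁ (hc _ _ _ _ h)
  · exact h₂ (hc _ _ _ _ h)
  · exact h₃ (hc _ _ _ _ h)

def ladderRank {n : ℕ} (x : Option (Fin n)) : ℕ := x.elim 0 Fin.val

theorem ladderRank_lt {n : ℕ} (x : Option (Fin (n + 1))) : ladderRank x < n + 1 := by
  cases x with
  | none => exact Nat.succ_pos n
  | some j => exact j.isLt

theorem eq_of_ladderRank_eq {n : ℕ} {x y : Option (Fin n)} (h : ladderRank x = ladderRank y)
    (hx : 0 < ladderRank x) : x = y := by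
  cases x <;> cases y <;> simp_all [ladderRank, Fin.ext_iff]

def ladderCone (k : ℕ) : Finset (Fin (k + 2)) := {j | 3 ≤ (j : ℕ)}

theorem card_ladderCone (k : ℕ) : (ladderCone k).card = k - 1 := by
  have := Fin.card_filter_val_lt (n := k + 2) (m := 3)
  have := card_filter_add_card_filter_not (s := univ) fun j : Fin (k + 2) => (j : ℕ) < 3
  simp only [card_univ, Fintype.card_fin, not_lt] at this
  unfold ladderCone
  omega

theorem isSome_of_oAdj_ladderCone {x y : Option (Fin (k + 2))} (h : OAdj (ladderCone k) x y)
    (hxy : max (ladderRank x) (ladderRank y) < 3) : x.isSome ∧ y.isSome := by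
  cases x <;> cases y <;> simp_all [OAdj, ladderCone, ladderRank] <;> omega

def ladderColoring (k : ℕ) [NeZero k] (x y : Option (Fin (k + 2))) : Fin k :=
  ⟨max (ladderRank x) (ladderRank y) - 2, by
    have := ladderRank_lt x; have := ladderRank_lt y; have := NeZero.pos k; omega⟩

theorem ladderColoring_comm (k : ℕ) [NeZero k] (x y : Option (Fin (k + 2))) :
    ladderColoring k x y = ladderColoring k y x :=
  Fin.ext (by simp only [ladderColoring, max_comm])

/-- A monochromatic `P₄` of colour `j > 0` would have two disjoint edges whose larger end has rank
`j + 2`; in colour `0` all four vertices have rank at most `2`, so none of them is the apex. -/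
theorem not_monoP4_ladderColoring (k : ℕ) [NeZero k] :
    ¬ MonoP4 (OAdj (ladderCone k)) (ladderColoring k) := by
  rintro ⟨a, b, d, e, hab, had, hae, hbd, hbe, hde, h₁, h₂, h₃, q₁, q₂⟩
  have Q₁ := congrArg Fin.val q₁
  have Q₂ := congrArg Fin.val q₂
  simp only [ladderColoring] at Q₁ Q₂
  by_cases hlow : max (ladderRank a) (ladderRank b) < 3
  · obtain ⟨ha, hb⟩ := isSome_of_oAdj_ladderCone h₁ hlow
    obtain ⟨hd, he⟩ := isSome_of_oAdj_ladderCone h₃ (by omega)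
    obtain ⟨a, rfl⟩ := Option.isSome_iff_exists.mp ha
    obtain ⟨b, rfl⟩ := Option.isSome_iff_exists.mp hb
    obtain ⟨d, rfl⟩ := Option.isSome_iff_exists.mp hd
    obtain ⟨e, rfl⟩ := Option.isSome_iff_exists.mp he
    simp only [ladderRank, Option.elim, ne_eq, Option.some_inj, Fin.ext_iff] at *
    omega
  · rcases (by omega : (ladderRank a = ladderRank d ∧ 0 < ladderRank a) ∨
        (ladderRank a = ladderRank e ∧ 0 < ladderRank a) ∨
        (ladderRank b = ladderRank d ∧ 0 < ladderRank b) ∨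
        (ladderRank b = ladderRank e ∧ 0 < ladderRank b))
      with ⟨h, h0⟩ | ⟨h, h0⟩ | ⟨h, h0⟩ | ⟨h, h0⟩
    · exact had (eq_of_ladderRank_eq h h0)
    · exact hae (eq_of_ladderRank_eq h h0)
    · exact hbd (eq_of_ladderRank_eq h h0)
    · exact hbe (eq_of_ladderRank_eq h h0)

theorem oAdj_of_coneAdj_univ {n : ℕ} {A : Finset (Fin n)} :
    ∀ x y, coneAdj univ A x y → OAdj A x y
  | some _, some _, h => h.2.2
  | some _, none, h => h
  | none, some _, h => h

theorem stmt11 (k : ℕ) (hk : 1 ≤ k) :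
    (∀ A : Finset (Fin (k + 2)), A.card = k →
      ∀ g : Option (Fin (k + 2)) → Option (Fin (k + 2)) → Fin k,
        (∀ a b, g a b = g b a) →
        ¬ RainbowTri (Full (V := Fin (k + 2))) (fun a b => g (some a) (some b)) →
        ¬ MonoP4 (Full (V := Fin (k + 2))) (fun a b => g (some a) (some b)) →
        RainbowTri (OAdj A) g ∨ MonoP4 (OAdj A) g) ∧
    (∃ A : Finset (Fin (k + 2)), A.card = k - 1 ∧
      ∃ g : Option (Fin (k + 2)) → Option (Fin (k + 2)) → Fin k,
        (∀ a b, g a b = g b a) ∧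
        ¬ RainbowTri (OAdj A) g ∧ ¬ MonoP4 (OAdj A) g) := by
  have : NeZero k := ⟨by omega⟩
  refine ⟨fun A hA g hg hR hP => ?_, ladderCone k, card_ladderCone k, ladderColoring k,
    ladderColoring_comm k, not_rainbowTri_of_max_eq ladderRank fun a b a' b' h => ?_,
    not_monoP4_ladderColoring k⟩
  · have hclique : ∀ a b : Fin (k + 2), cliqueAdj univ a b → Full a b := fun _ _ h => h.2.2
    refine (cone_rainbowTri_or_monoP4 hg (k - 1) univ univ A ?_ ?_ (subset_univ A) ?_
      (fun _ _ _ _ _ => mem_univ _) (fun _ _ => mem_univ _)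
      (mt (RainbowTri.mono hclique) hR) (mt (MonoP4.mono hclique) hP)).imp
      (RainbowTri.mono oAdj_of_coneAdj_univ) (MonoP4.mono oAdj_of_coneAdj_univ)
    all_goals simp only [card_univ, Fintype.card_fin, hA] <;> omega
  · exact Fin.ext (by simp only [ladderColoring, h])
end

section
/- Let k ≥ 3, let m ≥ 3 be odd, and let n = gr_k(K_3 : K_{1,m}) = (5m-3)/2. In any k-edge-coloring of K_{n-1} with no rainbow triangle and no monochromatic K_{1,m}, any Gallai partition with the smallest number of parts has exactly 5 parts, each of size exactly (m-1)/2. -/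
/-!
Write `m = 2s + 1`, so the graph has `5s` vertices and no vertex has `2s + 1` edges of one
colour. A vertex of a part sees every vertex outside its part in one of the two colours used
between parts, so every part has at least `s` vertices. If some part `H` had more than `s`, then
for any two other parts `X ≠ Y` the colour of `X`–`H` must differ from that of `X`–`Y` (else a
vertex of `X` sees `|Y| + |H| ≥ 2s + 1` vertices in one colour); with only two colours this forces
`X`–`H` and `Y`–`H` to have the same colour, so a vertex of `H` sees the `5s - |H|` vertices outside
`H` in one colour, and also `|H| ≤ 2s`, giving `5s ≤ 4s`. Hence all parts have exactly `s`
vertices, and there are five of them.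
-/

section MonoStar

variable {V : Type} [DecidableEq V] {k m : ℕ} {c : V → V → Fin k}

theorem card_lt_of_not_monoStar {χ : Fin k} (hns : ¬ MonoStar Full c m χ) {v : V}
    {S : Finset V} (hv : v ∉ S) (hS : ∀ u ∈ S, c v u = χ) : S.card < m := by
  by_contra! hm
  obtain ⟨T, hTS, rfl⟩ := Finset.exists_subset_card_eq hm
  exact hns ⟨v, T, rfl, fun h => hv (hTS h),
    fun u hu => ⟨fun h => hv (h ▸ hTS hu), hS u (hTS hu)⟩⟩

theorem card_le_of_not_monoStar_of_two_colors (hns : ∀ χ, ¬ MonoStar Full c m χ)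
    {c₁ c₂ : Fin k} {v : V} {S : Finset V} (hv : v ∉ S)
    (hS : ∀ u ∈ S, c v u = c₁ ∨ c v u = c₂) : S.card ≤ 2 * (m - 1) := by
  have h₁ := card_lt_of_not_monoStar (hns c₁) (S := S.filter (c v · = c₁))
    (fun h => hv (Finset.mem_of_mem_filter v h)) (fun u hu => (Finset.mem_filter.1 hu).2)
  have h₂ := card_lt_of_not_monoStar (hns c₂) (S := S.filter fun u => ¬c v u = c₁)
    (fun h => hv (Finset.mem_of_mem_filter v h))
    (fun u hu => (hS u (Finset.mem_filter.1 hu).1).resolve_left (Finset.mem_filter.1 hu).2)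
  have := Finset.card_filter_add_card_filter_not (s := S) (c v · = c₁)
  omega

end MonoStar

theorem eq_of_ne_of_ne_of_mem_pair {α : Type} {a b d x y : α} (ha : a = x ∨ a = y)
    (hb : b = x ∨ b = y) (hd : d = x ∨ d = y) (had : a ≠ d) (hbd : b ≠ d) : a = b := by
  grind

namespace IsGallaiPartition

variable {n k q : ℕ} {c : Fin n → Fin n → Fin k} {P : Fin q → Finset (Fin n)}

theorem nonempty (hP : IsGallaiPartition c P) (i : Fin q) : (P i).Nonempty := hP.2.1 i

theorem notMem_of_mem (hP : IsGallaiPartition c P) {i j : Fin q} (hij : i ≠ j) {u : Fin n}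
    (hu : u ∈ P i) : u ∉ P j :=
  Finset.disjoint_left.1 (hP.2.2.1 i j hij) hu

theorem exists_mem (hP : IsGallaiPartition c P) (u : Fin n) : ∃ i, u ∈ P i := hP.2.2.2.1 u

theorem color_eq (hP : IsGallaiPartition c P) {i j : Fin q} (hij : i ≠ j) {a a' b b' : Fin n}
    (ha : a ∈ P i) (ha' : a' ∈ P i) (hb : b ∈ P j) (hb' : b' ∈ P j) : c a b = c a' b' := by
  obtain ⟨col, hcol⟩ := hP.2.2.2.2.1 i j hij
  rw [hcol a ha b hb, hcol a' ha' b' hb']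

theorem exists_two_colors (hP : IsGallaiPartition c P) : ∃ c₁ c₂ : Fin k,
    ∀ i j, i ≠ j → ∀ a ∈ P i, ∀ b ∈ P j, c a b = c₁ ∨ c a b = c₂ :=
  hP.2.2.2.2.2

theorem exists_ne (hP : IsGallaiPartition c P) (i : Fin q) : ∃ j, j ≠ i :=
  have := Fin.nontrivial_iff_two_le.2 hP.1
  _root_.exists_ne i

theorem sum_card (hP : IsGallaiPartition c P) : ∑ i, (P i).card = n := by
  have hcover : Finset.univ.biUnion P = Finset.univ :=
    Finset.eq_univ_of_forall fun x => by simpa using hP.exists_mem x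
  rw [← Finset.card_biUnion fun i _ j _ hij => hP.2.2.1 i j hij, hcover, Finset.card_univ,
    Fintype.card_fin]

theorem exists_ne_of_notMem (hP : IsGallaiPartition c P) {i : Fin q} {u : Fin n}
    (hu : u ∉ P i) : ∃ j, j ≠ i ∧ u ∈ P j := by
  obtain ⟨j, hj⟩ := hP.exists_mem u
  exact ⟨j, fun h => hu (h ▸ hj), hj⟩

variable {m : ℕ}

theorem card_compl_le (hP : IsGallaiPartition c P) (hns : ∀ χ, ¬ MonoStar Full c m χ)
    (i : Fin q) : (P i)ᶜ.card ≤ 2 * (m - 1) := by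
  obtain ⟨v, hv⟩ := hP.nonempty i
  obtain ⟨c₁, c₂, htwo⟩ := hP.exists_two_colors
  refine card_le_of_not_monoStar_of_two_colors hns (c₁ := c₁) (c₂ := c₂)
    (fun h => Finset.mem_compl.1 h hv) fun u hu => ?_
  obtain ⟨j, hji, hj⟩ := hP.exists_ne_of_notMem (Finset.mem_compl.1 hu)
  exact htwo i j hji.symm v hv u hj

theorem card_lt (hP : IsGallaiPartition c P) (hns : ∀ χ, ¬ MonoStar Full c m χ)
    (j : Fin q) : (P j).card < m := by
  obtain ⟨i, hij⟩ := hP.exists_ne j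
  obtain ⟨v, hv⟩ := hP.nonempty i
  obtain ⟨u₀, hu₀⟩ := hP.nonempty j
  exact card_lt_of_not_monoStar (hns _) (hP.notMem_of_mem hij hv)
    fun u hu => hP.color_eq hij hv hv hu hu₀

theorem color_ne_of_le_add (hP : IsGallaiPartition c P) (hns : ∀ χ, ¬ MonoStar Full c m χ)
    {h i j : Fin q} (hh : m ≤ (P j).card + (P h).card) (hih : i ≠ h) (hjh : j ≠ h)
    (hij : i ≠ j) {u y z : Fin n} (hu : u ∈ P i) (hy : y ∈ P j) (hz : z ∈ P h) :
    c u y ≠ c u z := by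
  intro hyz
  have hstar := card_lt_of_not_monoStar (hns (c u z)) (S := P j ∪ P h)
    (Finset.notMem_union.2 ⟨hP.notMem_of_mem hij hu, hP.notMem_of_mem hih hu⟩)
    fun w hw => (Finset.mem_union.1 hw).elim
      (fun hw => (hP.color_eq hij hu hu hw hy).trans hyz)
      (fun hw => hP.color_eq hih hu hu hw hz)
  rw [Finset.card_union_of_disjoint (hP.2.2.1 j h hjh)] at hstar
  omega

theorem card_compl_lt_of_forall_le_add (hP : IsGallaiPartition c P)
    (hns : ∀ χ, ¬ MonoStar Full c m χ) (hsym : ∀ a b, c a b = c b a) {h : Fin q}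
    (hh : ∀ j, j ≠ h → m ≤ (P j).card + (P h).card) : (P h)ᶜ.card < m := by
  obtain ⟨v, hv⟩ := hP.nonempty h
  obtain ⟨j, hjh⟩ := hP.exists_ne h
  obtain ⟨u₀, hu₀⟩ := hP.nonempty j
  obtain ⟨c₁, c₂, htwo⟩ := hP.exists_two_colors
  refine card_lt_of_not_monoStar (hns (c v u₀)) (fun hvc => Finset.mem_compl.1 hvc hv)
    fun u hu => ?_
  obtain ⟨i, hih, hi⟩ := hP.exists_ne_of_notMem (Finset.mem_compl.1 hu)
  by_cases hij : i = j
  · subst hij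
    exact hP.color_eq hih.symm hv hv hi hu₀
  -- `c u v` and `c u₀ v` both differ from the colour of the edge `u u₀`
  rw [hsym v u, hsym v u₀]
  refine eq_of_ne_of_ne_of_mem_pair (htwo i h hih u hi v hv) (htwo j h hjh u₀ hu₀ v hv)
    (htwo i j hij u hi u₀ hu₀) (hP.color_ne_of_le_add hns (hh j hjh) hih hjh hij hi hu₀ hv).symm ?_
  rw [hsym u u₀]
  exact (hP.color_ne_of_le_add hns (hh i hih) hjh hih (Ne.symm hij) hu₀ hi hv).symm

end IsGallaiPartition

theorem stmt13_general (k m : ℕ) (hodd : Odd m)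
    (c : Fin ((5 * m - 3) / 2 - 1) → Fin ((5 * m - 3) / 2 - 1) → Fin k)
    (hsym : ∀ a b, c a b = c b a)
    (hns : ∀ i, ¬ MonoStar Full c m i)
    {q : ℕ} (P : Fin q → Finset (Fin ((5 * m - 3) / 2 - 1)))
    (hP : IsGallaiPartition c P) :
    q = 5 ∧ ∀ i, (P i).card = (m - 1) / 2 := by
  obtain ⟨s, rfl⟩ := hodd
  have hcompl : ∀ i, (P i)ᶜ.card + (P i).card = 5 * s := fun i => by
    rw [Finset.card_compl_add_card, Fintype.card_fin]
    omega
  have hge : ∀ i, s ≤ (P i).card := fun i => by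
    have := hP.card_compl_le hns i
    have := hcompl i
    omega
  have hcard : ∀ i, (P i).card = s := fun i => by
    by_contra hne
    have hlt := hP.card_compl_lt_of_forall_le_add hns hsym (h := i) fun j _ => by
      have := hge j
      have := hge i
      omega
    have := hP.card_lt hns i
    have := hcompl i
    omega
  have hs : 0 < s := hcard ⟨0, by have := hP.1; omega⟩ ▸ (hP.nonempty _).card_pos
  have hsum := hP.sum_card
  simp only [hcard, Finset.sum_const, Finset.card_univ, Fintype.card_fin, smul_eq_mul] at hsum
  exact ⟨Nat.eq_of_mul_eq_mul_right hs (by omega), fun i => by rw [hcard i]; omega⟩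

theorem stmt13 (k m : ℕ) (hk : 3 ≤ k) (hm : 3 ≤ m) (hodd : Odd m)
    (c : Fin ((5 * m - 3) / 2 - 1) → Fin ((5 * m - 3) / 2 - 1) → Fin k)
    (hsym : ∀ a b, c a b = c b a)
    (hnr : ¬ RainbowTri Full c) (hns : ∀ i, ¬ MonoStar Full c m i)
    {q : ℕ} (P : Fin q → Finset (Fin ((5 * m - 3) / 2 - 1)))
    (hP : IsGallaiPartition c P)
    (hmin : ∀ (q' : ℕ) (P' : Fin q' → Finset (Fin ((5 * m - 3) / 2 - 1))),
      IsGallaiPartition c P' → q ≤ q') :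
    q = 5 ∧ ∀ i, (P i).card = (m - 1) / 2 :=
  stmt13_general k m hodd c hsym hns P hP
end
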